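/- arXiv:2510.06765 — 4 statements merged into one kernel-verified Lean document; each statement's English description precedes it below -/
import Mathlib

section
/- Let $f:[1,\infty)\to\mathbb{R}$ be a nondecreasing function. Suppose there exist $k>0$ and a sequence $s_i\to\infty$ with $f(s_i)\le k s_i$ for all $i$. Then for every $l>1$ there exists a sequence $r_i\to\infty$ such that $f(r_i+t)-f(r_i)\le (k+l^{-1})t$ for all $t\in[1,l]$ and all $i$. -/
open Filter Set

theorem stmt0 (f : ℝ → ℝ) (hf : MonotoneOn f (Ici 1)) (k : ℝ) (hk : 0 < k)
    (s : ℕ → ℝ) (hs1 : ∀ i, 1 ≤ s i) (hs : Tendsto s atTop atTop)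
    (hfs : ∀ i, f (s i) ≤ k * s i) :
    ∀ l : ℝ, 1 < l → ∃ r : ℕ → ℝ, (∀ i, 1 ≤ r i) ∧ Tendsto r atTop atTop ∧
      ∀ i, ∀ t ∈ Icc 1 l, f (r i + t) - f (r i) ≤ (k + l⁻¹) * t := by
  intro l hl
  have hl0 : (0:ℝ) < l := lt_trans one_pos hl
  set ε : ℝ := (2*l)⁻¹ with hεdef
  have hε : 0 < ε := by positivity
  have h2ε : 2 * ε = l⁻¹ := by
    rw [hεdef]; field_simp
  have key : ∀ n : ℕ, ∃ r : ℝ, (n:ℝ) + 1 ≤ r ∧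
      ∀ t ∈ Icc 1 l, f (r + t) - f r ≤ (k + l⁻¹) * t := by
    intro n
    set N : ℝ := (n:ℝ) + 1 with hN
    have hN1 : (1:ℝ) ≤ N := by
      have : (0:ℝ) ≤ (n:ℝ) := Nat.cast_nonneg n
      linarith
    obtain ⟨i, hi⟩ := (hs.eventually (eventually_ge_atTop
      (max (N + l) (((k+ε)*l + ε + (k+ε)*N - f N)/ε + 1)))).exists
    set S := s i with hSdef
    have hS1 : N + l ≤ S := le_trans (le_max_left _ _) hi
    have hS2 : (k+ε)*l + ε + (k+ε)*N - f N < ε * S := by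
      have h := le_trans (le_max_right _ _) hi
      have h' : ((k+ε)*l + ε + (k+ε)*N - f N)/ε < S := by linarith
      have := (div_lt_iff₀ hε).mp h'
      linarith
    set g : ℝ → ℝ := fun r => f r - (k+ε)*r with hg
    have hNS : N ≤ S := by linarith
    have hkε : (0:ℝ) < k + ε := by linarith
    have hbdd : BddAbove (g '' Icc N S) := by
      refine ⟨f S - (k+ε)*N, ?_⟩
      rintro _ ⟨r, hr, rfl⟩
      have h1 : f r ≤ f S := hf (le_trans hN1 hr.1) (le_trans hN1 hNS) hr.2
      have h2 : (k+ε)*N ≤ (k+ε)*r := by nlinarith [hr.1]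
      simp only [hg]
      linarith
    have hne : (g '' Icc N S).Nonempty := ⟨g N, ⟨N, ⟨le_rfl, hNS⟩, rfl⟩⟩
    set M := sSup (g '' Icc N S) with hM
    have hgN : g N ≤ M := le_csSup hbdd ⟨N, ⟨le_rfl, hNS⟩, rfl⟩
    obtain ⟨_, ⟨x, hx, rfl⟩, hgx⟩ :=
      exists_lt_of_lt_csSup hne (show M - ε < M by linarith)
    have hxS : x ≤ S - l := by
      by_contra h
      push_neg at h
      have hfx : f x ≤ f S := hf (le_trans hN1 hx.1) (le_trans hN1 hNS) hx.2
      have hfS : f S ≤ k * S := hfs i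
      have h2 : (k+ε)*(S-l) ≤ (k+ε)*x := by nlinarith
      have hgxval : g x = f x - (k+ε)*x := rfl
      have hgNval : g N = f N - (k+ε)*N := rfl
      nlinarith [hgx, hgN]
    refine ⟨x, hx.1, fun t ht => ?_⟩
    have hxt : x + t ∈ Icc N S := ⟨by linarith [ht.1, hx.1], by linarith [ht.2, hx.1]⟩
    have hup : g (x+t) ≤ M := le_csSup hbdd ⟨x+t, hxt, rfl⟩
    have hgxtval : g (x+t) = f (x+t) - (k+ε)*(x+t) := rfl
    have hgxval : g x = f x - (k+ε)*x := rfl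
    have ht1 : (1:ℝ) ≤ t := ht.1
    have hεt : ε ≤ ε * t := by nlinarith
    have : f (x+t) - f x ≤ ε + (k+ε)*t := by nlinarith [hgx, hup]
    have hfin : ε + (k+ε)*t ≤ (k + l⁻¹)*t := by
      rw [← h2ε]; nlinarith
    linarith
  choose r hr1 hr2 using key
  refine ⟨r, ?_, ?_, hr2⟩
  · intro i
    have := hr1 i
    have : (0:ℝ) ≤ (i:ℝ) := Nat.cast_nonneg i
    linarith [hr1 i]
  · apply tendsto_atTop_mono (fun n => ?_) tendsto_natCast_atTop_atTop
    linarith [hr1 n]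
end

section
/- Let $0<\beta<\alpha<1$ and $b>1$. There exists $N=N(\alpha,\beta,b)$ such that for all $c\ge N$: $\beta c^{\beta-1} \le \frac{c^{\beta}-b^{\alpha}}{c-b} \le \alpha b^{\alpha-1}$. Consequently the function equal to $t^{\alpha}$ on $(0,b]$, affine on $[b,c]$ interpolating $(b,b^{\alpha})$ and $(c,c^{\beta})$, and equal to $t^{\beta}$ on $[c,\infty)$ is concave on $(0,\infty)$. -/
open Set

private lemma tangent_le {γ u v : ℝ} (hγ0 : 0 < γ) (hγ1 : γ < 1) (hu : 0 < u) (hv : 0 < v) :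
    u ^ γ ≤ v ^ γ + γ * v ^ (γ - 1) * (u - v) := by
  have key : u ^ γ * v ^ (1 - γ) ≤ γ * u + (1 - γ) * v :=
    Real.geom_mean_le_arith_mean2_weighted hγ0.le (by linarith) hu.le hv.le (by ring)
  have hC : (0:ℝ) < v ^ (γ - 1) := Real.rpow_pos_of_pos hv _
  have e1 : v ^ (1 - γ) * v ^ (γ - 1) = 1 := by
    rw [← Real.rpow_add hv]; norm_num
  have e2 : v * v ^ (γ - 1) = v ^ γ := by
    nth_rewrite 1 [← Real.rpow_one v]
    rw [← Real.rpow_add hv]; norm_num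
  have h3 := mul_le_mul_of_nonneg_right key hC.le
  have h4 : u ^ γ * (v ^ (1 - γ) * v ^ (γ - 1)) = u ^ γ := by rw [e1, mul_one]
  nlinarith [h3, h4, e2]

private lemma concaveOn_min {s : Set ℝ} {g h : ℝ → ℝ} (hg : ConcaveOn ℝ s g)
    (hh : ConcaveOn ℝ s h) : ConcaveOn ℝ s (fun x => min (g x) (h x)) := by
  refine ⟨hg.1, fun x hx y hy a b' ha hb' hab => le_min ?_ ?_⟩
  · exact le_trans (add_le_add (smul_le_smul_of_nonneg_left (min_le_left _ _) ha)
      (smul_le_smul_of_nonneg_left (min_le_left _ _) hb')) (hg.2 hx hy ha hb' hab)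
  · exact le_trans (add_le_add (smul_le_smul_of_nonneg_left (min_le_right _ _) ha)
      (smul_le_smul_of_nonneg_left (min_le_right _ _) hb')) (hh.2 hx hy ha hb' hab)

private lemma concaveOn_congr' {s : Set ℝ} {f g : ℝ → ℝ} (hg : ConcaveOn ℝ s g)
    (he : ∀ x ∈ s, f x = g x) : ConcaveOn ℝ s f :=
  ⟨hg.1, fun x hx y hy a b' ha hb' hab => by
    rw [he x hx, he y hy, he _ (hg.1 hx hy ha hb' hab)]; exact hg.2 hx hy ha hb' hab⟩

private lemma glue_left (α b m : ℝ) (hα0 : 0 < α) (hα : α < 1) (hb0 : 0 < b)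
    (hmK : m ≤ α * b ^ (α - 1)) :
    ConcaveOn ℝ (Ioi 0) (fun t => if t ≤ b then t ^ α else m * (t - b) + b ^ α) := by
  apply concaveOn_of_slope_anti_adjacent (convex_Ioi 0)
  intro x y z hx hz hxy hyz
  have hx0 : (0:ℝ) < x := hx
  have hy0 : (0:ℝ) < y := hx0.trans hxy
  have hz0 : (0:ℝ) < z := hy0.trans hyz
  have hxy' : (0:ℝ) < y - x := sub_pos.2 hxy
  have hyz' : (0:ℝ) < z - y := sub_pos.2 hyz
  by_cases hyb : y ≤ b
  · have hxb : x ≤ b := (hxy.trans_le hyb).le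
    have left : α * y ^ (α - 1) ≤ (y ^ α - x ^ α) / (y - x) := by
      rw [le_div_iff₀ hxy']
      nlinarith [tangent_le hα0 hα hx0 hy0]
    by_cases hzb : z ≤ b
    · simp only [if_pos hxb, if_pos hyb, if_pos hzb]
      refine le_trans ?_ left
      rw [div_le_iff₀ hyz']
      nlinarith [tangent_le hα0 hα hz0 hy0]
    · push_neg at hzb
      simp only [if_pos hxb, if_pos hyb, if_neg (not_le.2 hzb)]
      refine le_trans ?_ left
      rw [div_le_iff₀ hyz']
      have f2 : b ^ (α - 1) ≤ y ^ (α - 1) :=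
        Real.rpow_le_rpow_of_nonpos hy0 hyb (by linarith)
      have f2' : α * b ^ (α - 1) ≤ α * y ^ (α - 1) :=
        mul_le_mul_of_nonneg_left f2 hα0.le
      nlinarith [tangent_le hα0 hα hb0 hy0,
        mul_le_mul_of_nonneg_right hmK (sub_nonneg.2 hzb.le),
        mul_le_mul_of_nonneg_right f2' (sub_nonneg.2 hzb.le)]
  · push_neg at hyb
    have hzb : ¬ z ≤ b := not_le.2 (hyb.trans hyz)
    simp only [if_neg (not_le.2 hyb), if_neg hzb]
    have req : (m * (z - b) + b ^ α - (m * (y - b) + b ^ α)) / (z - y) = m := by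
      rw [div_eq_iff hyz'.ne']; ring
    rw [req]
    by_cases hxb : x ≤ b
    · simp only [if_pos hxb]
      rw [le_div_iff₀ hxy']
      nlinarith [tangent_le hα0 hα hx0 hb0,
        mul_le_mul_of_nonneg_right hmK (sub_nonneg.2 hxb)]
    · simp only [if_neg hxb]
      rw [le_div_iff₀ hxy']
      have : m * (y - x) = m * (y - b) + b ^ α - (m * (x - b) + b ^ α) := by ring
      linarith

private lemma glue_right (β c b A m : ℝ) (hβ : 0 < β) (hβ1 : β < 1) (hc0 : 0 < c)
    (hβm : β * c ^ (β - 1) ≤ m) (hA : m * (c - b) + A = c ^ β) :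
    ConcaveOn ℝ (Ioi 0) (fun t => if t ≤ c then m * (t - b) + A else t ^ β) := by
  apply concaveOn_of_slope_anti_adjacent (convex_Ioi 0)
  intro x y z hx hz hxy hyz
  have hx0 : (0:ℝ) < x := hx
  have hy0 : (0:ℝ) < y := hx0.trans hxy
  have hz0 : (0:ℝ) < z := hy0.trans hyz
  have hxy' : (0:ℝ) < y - x := sub_pos.2 hxy
  have hyz' : (0:ℝ) < z - y := sub_pos.2 hyz
  by_cases hyc : y ≤ c
  · have hxc : x ≤ c := (hxy.trans_le hyc).le
    have leq : (m * (y - b) + A - (m * (x - b) + A)) / (y - x) = m := by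
      rw [div_eq_iff hxy'.ne']; ring
    by_cases hzc : z ≤ c
    · simp only [if_pos hxc, if_pos hyc, if_pos hzc]
      rw [leq, div_le_iff₀ hyz']
      have : m * (z - b) + A - (m * (y - b) + A) = m * (z - y) := by ring
      linarith
    · push_neg at hzc
      simp only [if_pos hxc, if_pos hyc, if_neg (not_le.2 hzc)]
      rw [leq, div_le_iff₀ hyz']
      nlinarith [tangent_le hβ hβ1 hz0 hc0,
        mul_le_mul_of_nonneg_right hβm (sub_nonneg.2 hzc.le)]
  · push_neg at hyc
    have hzc : ¬ z ≤ c := not_le.2 (hyc.trans hyz)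
    simp only [if_neg (not_le.2 hyc), if_neg hzc]
    have right : (z ^ β - y ^ β) / (z - y) ≤ β * y ^ (β - 1) := by
      rw [div_le_iff₀ hyz']
      nlinarith [tangent_le hβ hβ1 hz0 hy0]
    refine le_trans right ?_
    by_cases hxc : x ≤ c
    · simp only [if_pos hxc]
      rw [le_div_iff₀ hxy']
      have f2 : y ^ (β - 1) ≤ c ^ (β - 1) :=
        Real.rpow_le_rpow_of_nonpos hc0 hyc.le (by linarith)
      have f2' : β * y ^ (β - 1) ≤ m := le_trans (mul_le_mul_of_nonneg_left f2 hβ.le) hβm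
      nlinarith [tangent_le hβ hβ1 hc0 hy0,
        mul_le_mul_of_nonneg_right f2' (sub_nonneg.2 hxc)]
    · simp only [if_neg hxc]
      rw [le_div_iff₀ hxy']
      nlinarith [tangent_le hβ hβ1 hx0 hy0]

private lemma min_glue (α β b c m : ℝ) (hα0 : 0 < α) (hα : α < 1) (hβ : 0 < β) (hβ1 : β < 1)
    (hb0 : 0 < b) (hbc : b < c) (hmK : m ≤ α * b ^ (α - 1)) (hβm : β * c ^ (β - 1) ≤ m)
    (hmc : m * (c - b) = c ^ β - b ^ α) :
    ∀ t ∈ Ioi (0:ℝ),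
      (if t ≤ b then t ^ α else if t ≤ c then m * (t - b) + b ^ α else t ^ β)
        = min (if t ≤ b then t ^ α else m * (t - b) + b ^ α)
            (if t ≤ c then m * (t - b) + b ^ α else t ^ β) := by
  intro t ht
  have ht0 : (0:ℝ) < t := ht
  have hc0 : (0:ℝ) < c := hb0.trans hbc
  by_cases htb : t ≤ b
  · have htc : t ≤ c := htb.trans hbc.le
    simp only [if_pos htb, if_pos htc]
    refine (min_eq_left ?_).symm
    nlinarith [tangent_le hα0 hα ht0 hb0,
      mul_le_mul_of_nonpos_right hmK (sub_nonpos.2 htb)]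
  · by_cases htc : t ≤ c
    · simp only [if_neg htb, if_pos htc, min_self]
    · simp only [if_neg htb, if_neg htc]
      refine (min_eq_right ?_).symm
      push_neg at htc
      nlinarith [tangent_le hβ hβ1 ht0 hc0,
        mul_le_mul_of_nonneg_right hβm (sub_nonneg.2 htc.le)]

theorem stmt8 (α β b : ℝ) (hβ : 0 < β) (hβα : β < α) (hα : α < 1) (hb : 1 < b) :
    ∃ N : ℝ, b < N ∧ ∀ c ≥ N,
      (β * c ^ (β - 1) ≤ (c ^ β - b ^ α) / (c - b) ∧
        (c ^ β - b ^ α) / (c - b) ≤ α * b ^ (α - 1)) ∧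
      ConcaveOn ℝ (Ioi 0)
        (fun t => if t ≤ b then t ^ α
          else if t ≤ c then (c ^ β - b ^ α) / (c - b) * (t - b) + b ^ α
          else t ^ β) := by
  have hb0 : (0:ℝ) < b := lt_trans one_pos hb
  have hα0 : 0 < α := hβ.trans hβα
  have hβ1 : β < 1 := hβα.trans hα
  have h1β : (0:ℝ) < 1 - β := by linarith
  have hK0 : 0 < α * b ^ (α - 1) := by positivity
  refine ⟨max (b+1) (max ((b ^ α / (1 - β)) ^ (1/β)) ((1 / (α * b ^ (α - 1))) ^ (1/(1-β)))),
    lt_of_lt_of_le (by linarith) (le_max_left _ _), ?_⟩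
  intro c hc
  have hbc : b < c := by
    have := le_trans (le_max_left _ _) hc
    linarith
  have hc0 : (0:ℝ) < c := hb0.trans hbc
  have hcb : (0:ℝ) < c - b := sub_pos.2 hbc
  have hbα0 : (0:ℝ) < b ^ α := Real.rpow_pos_of_pos hb0 _
  have hcβ10 : (0:ℝ) < c ^ (β - 1) := Real.rpow_pos_of_pos hc0 _
  have ecβ : c ^ (β - 1) * c = c ^ β := by
    rw [← Real.rpow_add_one hc0.ne']; norm_num
  -- (1-β) * c^β ≥ b^α
  have hA : b ^ α ≤ (1 - β) * c ^ β := by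
    have hN₁c : (b ^ α / (1 - β)) ^ (1/β) ≤ c :=
      le_trans (le_trans (le_max_left _ _) (le_max_right _ _)) hc
    have h00 : (0:ℝ) ≤ b ^ α / (1 - β) := by positivity
    have h1 := Real.rpow_le_rpow (by positivity) hN₁c hβ.le
    rw [one_div, Real.rpow_inv_rpow h00 hβ.ne'] at h1
    rw [div_le_iff₀ h1β] at h1
    linarith [h1]
  -- c^(β-1) ≤ K
  have h2' : c ^ (β - 1) ≤ α * b ^ (α - 1) := by
    have hN₂c : (1 / (α * b ^ (α - 1))) ^ (1/(1-β)) ≤ c :=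
      le_trans (le_trans (le_max_right _ _) (le_max_right _ _)) hc
    have h00 : (0:ℝ) ≤ 1 / (α * b ^ (α - 1)) := by positivity
    have h2 := Real.rpow_le_rpow (by positivity) hN₂c h1β.le
    rw [one_div (1-β), Real.rpow_inv_rpow h00 h1β.ne'] at h2
    have hcp : (0:ℝ) < c ^ (1 - β) := Real.rpow_pos_of_pos hc0 _
    have e : c ^ (β - 1) = (c ^ (1 - β))⁻¹ := by
      rw [← Real.rpow_neg hc0.le]; norm_num
    rw [one_div] at h2
    rw [e]
    calc (c ^ (1 - β))⁻¹ ≤ ((α * b ^ (α - 1))⁻¹)⁻¹ := by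
          apply inv_anti₀ (by positivity) h2
      _ = α * b ^ (α - 1) := inv_inv _
  have eKb : α * b ^ (α - 1) * b = α * b ^ α := by
    rw [mul_assoc, ← Real.rpow_add_one hb0.ne']; norm_num
  have hm2 : c ^ β - b ^ α ≤ (α * b ^ (α - 1)) * (c - b) := by
    have h3 : c ^ β ≤ (α * b ^ (α - 1)) * c := by
      rw [← ecβ]; exact mul_le_mul_of_nonneg_right h2' hc0.le
    have h4 : (0:ℝ) ≤ (1 - α) * b ^ α := mul_nonneg (by linarith) hbα0.le
    have h5 : (α * b ^ (α - 1)) * (c - b) = (α * b ^ (α - 1)) * c - α * b ^ (α - 1) * b := by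
      ring
    rw [h5, eKb]
    linarith
  have hm1 : β * c ^ (β - 1) * (c - b) ≤ c ^ β - b ^ α := by
    have e3 : β * c ^ (β - 1) * (c - b) = β * (c ^ (β - 1) * c) - β * (c ^ (β - 1) * b) := by
      ring
    have h6 : (0:ℝ) ≤ β * (c ^ (β - 1) * b) := by positivity
    rw [e3, ecβ]
    nlinarith [hA]
  set m := (c ^ β - b ^ α) / (c - b) with hmdef
  have hmK : m ≤ α * b ^ (α - 1) := (div_le_iff₀ hcb).2 hm2
  have hβm : β * c ^ (β - 1) ≤ m := (le_div_iff₀ hcb).2 hm1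
  have hmc : m * (c - b) = c ^ β - b ^ α := div_mul_cancel₀ _ hcb.ne'
  refine ⟨⟨hβm, hmK⟩, ?_⟩
  exact concaveOn_congr'
    (concaveOn_min (glue_left α b m hα0 hα hb0 hmK)
      (glue_right β c b (b ^ α) m hβ hβ1 hc0 hβm (by linarith)))
    (min_glue α β b c m hα0 hα hβ hβ1 hb0 hbc hmK hβm hmc)
end

section
/- Let $(Y,d)$ be a proper geodesic metric space that is nonbranching (two geodesics agreeing on a nontrivial initial segment agree on their common domain). Let $\gamma:[0,\infty)\to Y$ be a unit-speed ray with $\gamma(0)=y$, let $a>0$, $q\in Y$ with $d(y,q)=a$ and $q\ne\gamma(a)$, and let $h:[0,2L]\to Y$ be a unit-speed geodesic from $q$ to $\gamma(a)$ with $y\notin\mathrm{Im}(h)$, where $2L=d(q,\gamma(a))$. Then for any two distinct points $q_1,q_2\in h([L,2L])$ and any geodesics $\lambda_1,\lambda_2$ from $q_1,q_2$ respectively to $y$, one has $\mathrm{Im}(\lambda_1)\cap\mathrm{Im}(\lambda_2)=\{y\}$. -/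
open Set

private lemma concat_geo {Y : Type*} [MetricSpace Y] {c₁ c₂ : ℝ → Y} {A B : ℝ}
    (hA : 0 ≤ A) (hB : 0 ≤ B)
    (h₁ : ∀ s ∈ Icc (0:ℝ) A, ∀ t ∈ Icc (0:ℝ) A, dist (c₁ s) (c₁ t) = |s - t|)
    (h₂ : ∀ s ∈ Icc (0:ℝ) B, ∀ t ∈ Icc (0:ℝ) B, dist (c₂ s) (c₂ t) = |s - t|)
    (hjoin : c₁ A = c₂ 0) (hend : dist (c₁ 0) (c₂ B) = A + B)
    (g : ℝ → Y) (hgle : ∀ u, u ≤ A → g u = c₁ u) (hggt : ∀ u, A < u → g u = c₂ (u - A)) :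
    ∀ s ∈ Icc (0:ℝ) (A + B), ∀ t ∈ Icc (0:ℝ) (A + B), dist (g s) (g t) = |s - t| := by
  have key : ∀ s ∈ Icc (0:ℝ) (A+B), ∀ t ∈ Icc (0:ℝ) (A+B), s ≤ t →
      dist (g s) (g t) = t - s := by
    intro s hs t ht hst
    by_cases hta : t ≤ A
    · rw [hgle s (hst.trans hta), hgle t hta,
        h₁ s ⟨hs.1, hst.trans hta⟩ t ⟨ht.1, hta⟩, abs_sub_comm,
        abs_of_nonneg (by linarith)]
    · push_neg at hta
      rw [hggt t hta]
      have htB : t - A ∈ Icc (0:ℝ) B := ⟨by linarith, by linarith [ht.2]⟩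
      by_cases hsa : s ≤ A
      · rw [hgle s hsa]
        have h1 : dist (c₁ s) (c₂ 0) = A - s := by
          rw [← hjoin, h₁ s ⟨hs.1, hsa⟩ A ⟨hA, le_refl A⟩,
            abs_of_nonpos (by linarith), neg_sub]
        have h2 : dist (c₂ 0) (c₂ (t - A)) = t - A := by
          rw [h₂ 0 ⟨le_refl 0, hB⟩ (t-A) htB, abs_of_nonpos (by linarith), neg_sub,
            sub_zero]
        have h3 : dist (c₁ 0) (c₁ s) = s := by
          rw [h₁ 0 ⟨le_refl 0, hA⟩ s ⟨hs.1, hsa⟩, abs_of_nonpos (by linarith [hs.1]),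
            neg_sub, sub_zero]
        have h4 : dist (c₂ (t-A)) (c₂ B) = B - (t - A) := by
          rw [h₂ (t-A) htB B ⟨hB, le_refl B⟩, abs_of_nonpos (by linarith [ht.2]), neg_sub]
        have hub : dist (c₁ s) (c₂ (t - A)) ≤ t - s := by
          have := dist_triangle (c₁ s) (c₂ 0) (c₂ (t - A))
          linarith
        have hlb : t - s ≤ dist (c₁ s) (c₂ (t - A)) := by
          have := dist_triangle4 (c₁ 0) (c₁ s) (c₂ (t - A)) (c₂ B)
          linarith
        linarith
      · push_neg at hsa
        rw [hggt s hsa,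
          h₂ (s - A) ⟨by linarith, by linarith [hs.2]⟩ (t - A) htB]
        rw [show s - A - (t - A) = s - t by ring, abs_of_nonpos (by linarith), neg_sub]
  intro s hs t ht
  rcases le_total s t with hst | hst
  · rw [key s hs t ht hst, abs_of_nonpos (by linarith), neg_sub]
  · rw [dist_comm, key t ht s hs hst, abs_of_nonneg (by linarith)]

private lemma aux_on {Y : Type*} [MetricSpace Y]
    (hnb : ∀ (T : ℝ) (c₁ c₂ : ℝ → Y),
      (∀ s ∈ Icc (0:ℝ) T, ∀ t ∈ Icc (0:ℝ) T, dist (c₁ s) (c₁ t) = |s - t|) →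
      (∀ s ∈ Icc (0:ℝ) T, ∀ t ∈ Icc (0:ℝ) T, dist (c₂ s) (c₂ t) = |s - t|) →
      (∃ ε > (0:ℝ), ∀ t ∈ Icc (0:ℝ) ε, c₁ t = c₂ t) →
      ∀ t ∈ Icc (0:ℝ) T, c₁ t = c₂ t)
    (y q₁ q₂ : Y) (l₁ l₂ : ℝ → Y)
    (hl₁0 : l₁ 0 = q₁) (hl₁1 : l₁ (dist q₁ y) = y)
    (hl₁geo : ∀ s ∈ Icc (0:ℝ) (dist q₁ y), ∀ t ∈ Icc (0:ℝ) (dist q₁ y),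
      dist (l₁ s) (l₁ t) = |s - t|)
    (hl₂0 : l₂ 0 = q₂) (hl₂1 : l₂ (dist q₂ y) = y)
    (hl₂geo : ∀ s ∈ Icc (0:ℝ) (dist q₂ y), ∀ t ∈ Icc (0:ℝ) (dist q₂ y),
      dist (l₂ s) (l₂ t) = |s - t|)
    (hle : dist q₁ y ≤ dist q₂ y)
    (p : Y) (hpy : p ≠ y)
    (u₁ : ℝ) (hu₁ : u₁ ∈ Icc (0:ℝ) (dist q₁ y)) (hp₁ : l₁ u₁ = p)
    (u₂ : ℝ) (hu₂ : u₂ ∈ Icc (0:ℝ) (dist q₂ y)) (hp₂ : l₂ u₂ = p) :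
    l₂ (dist q₂ y - dist q₁ y) = q₁ := by
  obtain ⟨d₁, hd₁⟩ : ∃ d, d = dist q₁ y := ⟨_, rfl⟩
  obtain ⟨d₂, hd₂⟩ : ∃ d, d = dist q₂ y := ⟨_, rfl⟩
  rw [← hd₁] at hl₁1 hl₁geo hu₁ hle ⊢
  rw [← hd₂] at hl₂1 hl₂geo hu₂ hle ⊢
  have hd₁0 : 0 ≤ d₁ := hd₁ ▸ dist_nonneg
  have hd₂0 : 0 ≤ d₂ := hd₂ ▸ dist_nonneg
  have hpy₁ : dist p y = d₁ - u₁ := by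
    rw [← hp₁, ← hl₁1, hl₁geo u₁ hu₁ d₁ ⟨hd₁0, le_refl _⟩,
      abs_of_nonpos (by linarith [hu₁.2]), neg_sub]
  have hpy₂ : dist p y = d₂ - u₂ := by
    rw [← hp₂, ← hl₂1, hl₂geo u₂ hu₂ d₂ ⟨hd₂0, le_refl _⟩,
      abs_of_nonpos (by linarith [hu₂.2]), neg_sub]
  have he0 : 0 < d₁ - u₁ := by rw [← hpy₁]; exact dist_pos.mpr hpy
  have hu₂e : u₂ = d₂ - (d₁ - u₁) := by linarith [hpy₁.symm.trans hpy₂]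
  -- concatenation g : q₁ → p → y, geodesic of length d₁
  set g : ℝ → Y := fun u => if u ≤ u₁ then l₁ u else l₂ (u₂ + (u - u₁)) with hgdef
  have hgle : ∀ u, u ≤ u₁ → g u = l₁ u := by
    intro u hu; simp only [hgdef]; rw [if_pos hu]
  have hggt : ∀ u, u₁ < u → g u = l₂ (u₂ + (u - u₁)) := by
    intro u hu; simp only [hgdef]; rw [if_neg (not_le.mpr hu)]
  have hcg : ∀ s ∈ Icc (0:ℝ) d₁, ∀ t ∈ Icc (0:ℝ) d₁, dist (g s) (g t) = |s - t| := by
    have h₂' : ∀ s ∈ Icc (0:ℝ) (d₁ - u₁), ∀ t ∈ Icc (0:ℝ) (d₁ - u₁),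
        dist ((fun t => l₂ (u₂ + t)) s) ((fun t => l₂ (u₂ + t)) t) = |s - t| := by
      intro s hs t ht
      show dist (l₂ (u₂ + s)) (l₂ (u₂ + t)) = |s - t|
      rw [hl₂geo (u₂ + s) ⟨by linarith [hu₂.1, hs.1], by rw [hu₂e]; linarith [hs.2]⟩
        (u₂ + t) ⟨by linarith [hu₂.1, ht.1], by rw [hu₂e]; linarith [ht.2]⟩,
        add_sub_add_left_eq_sub]
    have h₁' : ∀ s ∈ Icc (0:ℝ) u₁, ∀ t ∈ Icc (0:ℝ) u₁,
        dist (l₁ s) (l₁ t) = |s - t| := fun s hs t ht =>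
      hl₁geo s ⟨hs.1, hs.2.trans hu₁.2⟩ t ⟨ht.1, ht.2.trans hu₁.2⟩
    have hjoin' : l₁ u₁ = (fun t => l₂ (u₂ + t)) 0 := by
      show l₁ u₁ = l₂ (u₂ + 0)
      rw [add_zero, hp₁, hp₂]
    have hend' : dist (l₁ 0) ((fun t => l₂ (u₂ + t)) (d₁ - u₁)) = u₁ + (d₁ - u₁) := by
      show dist (l₁ 0) (l₂ (u₂ + (d₁ - u₁))) = u₁ + (d₁ - u₁)
      rw [show u₂ + (d₁ - u₁) = d₂ by rw [hu₂e]; ring, hl₂1, hl₁0, ← hd₁]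
      ring
    have := concat_geo hu₁.1 he0.le h₁' h₂' hjoin' hend' g hgle
      (fun u hu => hggt u hu)
    rwa [show u₁ + (d₁ - u₁) = d₁ by ring] at this
  -- reversed g (y → q₁) vs reversed l₂ (y → q₂)
  have hrev : ∀ s ∈ Icc (0:ℝ) d₁, ∀ t ∈ Icc (0:ℝ) d₁,
      dist ((fun u => g (d₁ - u)) s) ((fun u => g (d₁ - u)) t) = |s - t| := by
    intro s hs t ht
    show dist (g (d₁ - s)) (g (d₁ - t)) = |s - t|
    rw [hcg (d₁ - s) ⟨by linarith [hs.2], by linarith [hs.1]⟩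
      (d₁ - t) ⟨by linarith [ht.2], by linarith [ht.1]⟩,
      show d₁ - s - (d₁ - t) = t - s by ring, abs_sub_comm]
  have hμ : ∀ s ∈ Icc (0:ℝ) d₁, ∀ t ∈ Icc (0:ℝ) d₁,
      dist ((fun u => l₂ (d₂ - u)) s) ((fun u => l₂ (d₂ - u)) t) = |s - t| := by
    intro s hs t ht
    show dist (l₂ (d₂ - s)) (l₂ (d₂ - t)) = |s - t|
    rw [hl₂geo (d₂ - s) ⟨by linarith [hs.2], by linarith [hs.1]⟩
      (d₂ - t) ⟨by linarith [ht.2], by linarith [ht.1]⟩,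
      show d₂ - s - (d₂ - t) = t - s by ring, abs_sub_comm]
  have hagree : ∃ ε > (0:ℝ), ∀ t ∈ Icc (0:ℝ) ε,
      (fun u => g (d₁ - u)) t = (fun u => l₂ (d₂ - u)) t := by
    refine ⟨d₁ - u₁, he0, fun t ht => ?_⟩
    show g (d₁ - t) = l₂ (d₂ - t)
    rcases lt_or_eq_of_le ht.2 with hte | hte
    · rw [hggt (d₁ - t) (by linarith)]
      congr 1
      rw [hu₂e]; ring
    · rw [hgle (d₁ - t) (by rw [hte]; linarith),
        show d₁ - t = u₁ by rw [hte]; ring,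
        show d₂ - t = u₂ by rw [hte, hu₂e], hp₁, hp₂]
  have hfin := hnb d₁ _ _ hrev hμ hagree d₁ ⟨hd₁0, le_refl _⟩
  have h0 : g (d₁ - d₁) = l₂ (d₂ - d₁) := hfin
  rw [sub_self, hgle 0 hu₁.1, hl₁0] at h0
  exact h0.symm

private lemma core13 {Y : Type*} [MetricSpace Y]
    (hnb : ∀ (T : ℝ) (c₁ c₂ : ℝ → Y),
      (∀ s ∈ Icc (0:ℝ) T, ∀ t ∈ Icc (0:ℝ) T, dist (c₁ s) (c₁ t) = |s - t|) →
      (∀ s ∈ Icc (0:ℝ) T, ∀ t ∈ Icc (0:ℝ) T, dist (c₂ s) (c₂ t) = |s - t|) →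
      (∃ ε > (0:ℝ), ∀ t ∈ Icc (0:ℝ) ε, c₁ t = c₂ t) →
      ∀ t ∈ Icc (0:ℝ) T, c₁ t = c₂ t)
    (γ : ℝ → Y) (hγ : ∀ s ≥ (0:ℝ), ∀ t ≥ (0:ℝ), dist (γ s) (γ t) = |s - t|)
    (y : Y) (hy : γ 0 = y) (a : ℝ) (ha : 0 < a)
    (q : Y) (hq : dist y q = a)
    (L : ℝ) (hLpos : 0 < L)
    (h : ℝ → Y) (hh0 : h 0 = q) (hh1 : h (2*L) = γ a)
    (hhgeo : ∀ s ∈ Icc (0:ℝ) (2*L), ∀ t ∈ Icc (0:ℝ) (2*L), dist (h s) (h t) = |s - t|)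
    (hyh : y ∉ h '' Icc 0 (2*L))
    (s s' : ℝ) (hs : s ∈ Icc L (2*L)) (hs' : s' ∈ Icc L (2*L)) (hss : s ≠ s')
    (lam : ℝ → Y) (D : ℝ) (hD : D = dist (h s') y)
    (hlgeo : ∀ u ∈ Icc (0:ℝ) D, ∀ v ∈ Icc (0:ℝ) D, dist (lam u) (lam v) = |u - v|)
    (hl0 : lam 0 = h s') (hl1 : lam D = y)
    (hkD : |s - s'| ≤ D) (hlk : lam |s - s'| = h s) : False := by
  have hs0 : 0 ≤ s := hLpos.le.trans hs.1
  have hs'0 : 0 ≤ s' := hLpos.le.trans hs'.1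
  have h2L : 0 ≤ 2*L := by linarith
  have hD0 : 0 ≤ D := hD ▸ dist_nonneg
  have hγay : dist (γ a) y = a := by
    rw [← hy, hγ a ha.le 0 le_rfl, sub_zero, abs_of_nonneg ha.le]
  have hqy : dist q y = a := by rw [dist_comm]; exact hq
  have hnotim : ∀ x, x ∈ Icc (0:ℝ) (2*L) → y ≠ h x := fun x hx hyx => hyh ⟨x, hx, hyx.symm⟩
  have hμ : ∀ u ∈ Icc (0:ℝ) D, ∀ v ∈ Icc (0:ℝ) D,
      dist ((fun w => lam (D - w)) u) ((fun w => lam (D - w)) v) = |u - v| := by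
    intro u hu v hv
    show dist (lam (D - u)) (lam (D - v)) = |u - v|
    rw [hlgeo (D - u) ⟨by linarith [hu.2], by linarith [hu.1]⟩
      (D - v) ⟨by linarith [hv.2], by linarith [hv.1]⟩,
      show D - u - (D - v) = v - u by ring, abs_sub_comm]
  rcases lt_or_gt_of_ne hss with hlt | hlt
  -- CASE 1 : s < s'
  · have habs : |s - s'| = s' - s := by rw [abs_of_nonpos (by linarith), neg_sub]
    rw [habs] at hkD hlk
    have hdsy : dist (h s) y = D - (s' - s) := by
      rw [← hlk, ← hl1, hlgeo (s' - s) ⟨by linarith, hkD⟩ D ⟨hD0, le_rfl⟩,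
        abs_of_nonpos (by linarith), neg_sub]
    have hApos : 0 < D - (s' - s) := by
      rw [← hdsy]; exact dist_pos.mpr (fun e => hnotim s ⟨hs0, hs.2⟩ e.symm)
    -- σ : y → h s → h s' geodesic
    set A := D - (s' - s) with hAdef
    set σ : ℝ → Y := fun u => if u ≤ A then lam (D - u) else h (s + (u - A)) with hσdef
    have hσle : ∀ u, u ≤ A → σ u = lam (D - u) := by
      intro u hu; simp only [hσdef]; rw [if_pos hu]
    have hσgt : ∀ u, A < u → σ u = h (s + (u - A)) := by
      intro u hu; simp only [hσdef]; rw [if_neg (not_le.mpr hu)]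
    have hσgeo : ∀ u ∈ Icc (0:ℝ) D, ∀ v ∈ Icc (0:ℝ) D, dist (σ u) (σ v) = |u - v| := by
      have h₁' : ∀ u ∈ Icc (0:ℝ) A, ∀ v ∈ Icc (0:ℝ) A,
          dist ((fun w => lam (D - w)) u) ((fun w => lam (D - w)) v) = |u - v| := by
        intro u hu v hv
        exact hμ u ⟨hu.1, by rw [hAdef] at hu; linarith [hu.2]⟩
          v ⟨hv.1, by rw [hAdef] at hv; linarith [hv.2]⟩
      have h₂' : ∀ u ∈ Icc (0:ℝ) (s' - s), ∀ v ∈ Icc (0:ℝ) (s' - s),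
          dist ((fun t => h (s + t)) u) ((fun t => h (s + t)) v) = |u - v| := by
        intro u hu v hv
        show dist (h (s + u)) (h (s + v)) = |u - v|
        rw [hhgeo (s + u) ⟨by linarith [hu.1], by linarith [hu.2, hs'.2]⟩
          (s + v) ⟨by linarith [hv.1], by linarith [hv.2, hs'.2]⟩, add_sub_add_left_eq_sub]
      have hjoin' : (fun w => lam (D - w)) A = (fun t => h (s + t)) 0 := by
        show lam (D - A) = h (s + 0)
        rw [show D - A = s' - s by rw [hAdef]; ring, add_zero, hlk]
      have hend' : dist ((fun w => lam (D - w)) 0) ((fun t => h (s + t)) (s' - s))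
          = A + (s' - s) := by
        show dist (lam (D - 0)) (h (s + (s' - s))) = A + (s' - s)
        rw [sub_zero, hl1, show s + (s' - s) = s' by ring, dist_comm, ← hD, hAdef]
        ring
      have := concat_geo hApos.le (by linarith : (0:ℝ) ≤ s' - s) h₁' h₂' hjoin' hend'
        σ hσle hσgt
      rwa [show A + (s' - s) = D by rw [hAdef]; ring] at this
    have heq1 := hnb D σ (fun w => lam (D - w)) hσgeo hμ
      ⟨A, hApos, fun t ht => by rw [hσle t ht.2]⟩
    have fact1 : ∀ u ∈ Icc (0:ℝ) (s' - s), lam u = h (s' - u) := by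
      intro u hu
      rcases eq_or_lt_of_le hu.2 with hue | hue
      · rw [hue, show s' - (s' - s) = s by ring]; exact hlk
      · have hmem : D - u ∈ Icc (0:ℝ) D := ⟨by linarith, by linarith [hu.1]⟩
        have h1 : σ (D - u) = lam (D - (D - u)) := heq1 (D - u) hmem
        rw [hσgt (D - u) (by rw [hAdef]; linarith), show D - (D - u) = u by ring,
          show s + (D - u - A) = s' - u by rw [hAdef]; ring] at h1
        exact h1.symm
    -- second nonbranching from h s'
    have hη : ∀ u ∈ Icc (0:ℝ) (min D s'), ∀ v ∈ Icc (0:ℝ) (min D s'),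
        dist ((fun t => h (s' - t)) u) ((fun t => h (s' - t)) v) = |u - v| := by
      intro u hu v hv
      have hus : u ≤ s' := hu.2.trans (min_le_right _ _)
      have hvs : v ≤ s' := hv.2.trans (min_le_right _ _)
      show dist (h (s' - u)) (h (s' - v)) = |u - v|
      rw [hhgeo (s' - u) ⟨by linarith [hu.1], by linarith [hs'.2, hu.1]⟩
        (s' - v) ⟨by linarith [hv.1], by linarith [hs'.2, hv.1]⟩,
        show s' - u - (s' - v) = v - u by ring, abs_sub_comm]
    have heq2 := hnb (min D s') lam (fun t => h (s' - t))
      (fun u hu v hv => hlgeo u ⟨hu.1, hu.2.trans (min_le_left _ _)⟩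
        v ⟨hv.1, hv.2.trans (min_le_left _ _)⟩)
      hη ⟨s' - s, by linarith, fun t ht => fact1 t ht⟩
    rcases le_total D s' with hDs | hsD
    · have h1 : lam D = h (s' - D) := heq2 D ⟨hD0, le_min le_rfl hDs⟩
      rw [hl1] at h1
      exact hnotim (s' - D) ⟨by linarith, by linarith [hs'.2]⟩ h1
    · have h1 : lam s' = h (s' - s') := heq2 s' ⟨hs'0, le_min hsD le_rfl⟩
      rw [sub_self, hh0] at h1
      have h2 : dist q y = D - s' := by
        rw [← h1, ← hl1, hlgeo s' ⟨hs'0, hsD⟩ D ⟨hD0, le_rfl⟩,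
          abs_of_nonpos (by linarith), neg_sub]
      rw [hqy] at h2
      have htri : D ≤ (2*L - s') + a := by
        rw [hD]
        have t1 := dist_triangle (h s') (γ a) y
        have t2 : dist (h s') (γ a) = 2*L - s' := by
          rw [← hh1, hhgeo s' ⟨hs'0, hs'.2⟩ (2*L) ⟨h2L, le_rfl⟩,
            abs_of_nonpos (by linarith [hs'.2]), neg_sub]
        rw [t2, hγay] at t1
        exact t1
      linarith [hs.1]
  -- CASE 2 : s' < s
  · have habs : |s - s'| = s - s' := abs_of_nonneg (by linarith)
    rw [habs] at hkD hlk
    have hdsy : dist (h s) y = D - (s - s') := by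
      rw [← hlk, ← hl1, hlgeo (s - s') ⟨by linarith, hkD⟩ D ⟨hD0, le_rfl⟩,
        abs_of_nonpos (by linarith), neg_sub]
    have hApos : 0 < D - (s - s') := by
      rw [← hdsy]; exact dist_pos.mpr (fun e => hnotim s ⟨hs0, hs.2⟩ e.symm)
    set A := D - (s - s') with hAdef
    set σ : ℝ → Y := fun u => if u ≤ A then lam (D - u) else h (s - (u - A)) with hσdef
    have hσle : ∀ u, u ≤ A → σ u = lam (D - u) := by
      intro u hu; simp only [hσdef]; rw [if_pos hu]
    have hσgt : ∀ u, A < u → σ u = h (s - (u - A)) := by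
      intro u hu; simp only [hσdef]; rw [if_neg (not_le.mpr hu)]
    have hσgeo : ∀ u ∈ Icc (0:ℝ) D, ∀ v ∈ Icc (0:ℝ) D, dist (σ u) (σ v) = |u - v| := by
      have h₁' : ∀ u ∈ Icc (0:ℝ) A, ∀ v ∈ Icc (0:ℝ) A,
          dist ((fun w => lam (D - w)) u) ((fun w => lam (D - w)) v) = |u - v| := by
        intro u hu v hv
        exact hμ u ⟨hu.1, by rw [hAdef] at hu; linarith [hu.2]⟩
          v ⟨hv.1, by rw [hAdef] at hv; linarith [hv.2]⟩
      have h₂' : ∀ u ∈ Icc (0:ℝ) (s - s'), ∀ v ∈ Icc (0:ℝ) (s - s'),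
          dist ((fun t => h (s - t)) u) ((fun t => h (s - t)) v) = |u - v| := by
        intro u hu v hv
        show dist (h (s - u)) (h (s - v)) = |u - v|
        rw [hhgeo (s - u) ⟨by linarith [hu.2], by linarith [hu.1, hs.2]⟩
          (s - v) ⟨by linarith [hv.2], by linarith [hv.1, hs.2]⟩,
          show s - u - (s - v) = v - u by ring, abs_sub_comm]
      have hjoin' : (fun w => lam (D - w)) A = (fun t => h (s - t)) 0 := by
        show lam (D - A) = h (s - 0)
        rw [show D - A = s - s' by rw [hAdef]; ring, sub_zero, hlk]
      have hend' : dist ((fun w => lam (D - w)) 0) ((fun t => h (s - t)) (s - s'))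
          = A + (s - s') := by
        show dist (lam (D - 0)) (h (s - (s - s'))) = A + (s - s')
        rw [sub_zero, hl1, show s - (s - s') = s' by ring, dist_comm, ← hD, hAdef]
        ring
      have := concat_geo hApos.le (by linarith : (0:ℝ) ≤ s - s') h₁' h₂' hjoin' hend'
        σ hσle hσgt
      rwa [show A + (s - s') = D by rw [hAdef]; ring] at this
    have heq1 := hnb D σ (fun w => lam (D - w)) hσgeo hμ
      ⟨A, hApos, fun t ht => by rw [hσle t ht.2]⟩
    have fact1 : ∀ u ∈ Icc (0:ℝ) (s - s'), lam u = h (s' + u) := by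
      intro u hu
      rcases eq_or_lt_of_le hu.2 with hue | hue
      · rw [hue, show s' + (s - s') = s by ring]; exact hlk
      · have hmem : D - u ∈ Icc (0:ℝ) D := ⟨by linarith, by linarith [hu.1]⟩
        have h1 : σ (D - u) = lam (D - (D - u)) := heq1 (D - u) hmem
        rw [hσgt (D - u) (by rw [hAdef]; linarith), show D - (D - u) = u by ring,
          show s - (D - u - A) = s' + u by rw [hAdef]; ring] at h1
        exact h1.symm
    -- second nonbranching from h s' upward along h
    have hη : ∀ u ∈ Icc (0:ℝ) (min D (2*L - s')), ∀ v ∈ Icc (0:ℝ) (min D (2*L - s')),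
        dist ((fun t => h (s' + t)) u) ((fun t => h (s' + t)) v) = |u - v| := by
      intro u hu v hv
      have hus : u ≤ 2*L - s' := hu.2.trans (min_le_right _ _)
      have hvs : v ≤ 2*L - s' := hv.2.trans (min_le_right _ _)
      show dist (h (s' + u)) (h (s' + v)) = |u - v|
      rw [hhgeo (s' + u) ⟨by linarith [hu.1], by linarith⟩
        (s' + v) ⟨by linarith [hv.1], by linarith⟩, add_sub_add_left_eq_sub]
    have heq2 := hnb (min D (2*L - s')) lam (fun t => h (s' + t))
      (fun u hu v hv => hlgeo u ⟨hu.1, hu.2.trans (min_le_left _ _)⟩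
        v ⟨hv.1, hv.2.trans (min_le_left _ _)⟩)
      hη ⟨s - s', by linarith, fun t ht => fact1 t ht⟩
    rcases le_total D (2*L - s') with hDb | hbD
    · have h1 : lam D = h (s' + D) := heq2 D ⟨hD0, le_min le_rfl hDb⟩
      rw [hl1] at h1
      exact hnotim (s' + D) ⟨by linarith, by linarith⟩ h1
    · have h1 : lam (2*L - s') = h (s' + (2*L - s')) :=
        heq2 (2*L - s') ⟨by linarith [hs.2], le_min hbD le_rfl⟩
      rw [show s' + (2*L - s') = 2*L by ring, hh1] at h1
      have h2 : dist (γ a) y = D - (2*L - s') := by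
        rw [← h1, ← hl1, hlgeo (2*L - s') ⟨by linarith [hs.2], hbD⟩ D ⟨hD0, le_rfl⟩,
          abs_of_nonpos (by linarith), neg_sub]
      rw [hγay] at h2
      have hDval : D = a + (2*L - s') := by linarith
      -- third nonbranching: (y → γ a → h s') vs γ itself
      set τ : ℝ → Y := fun u => if u ≤ a then γ u else lam (D - a - (u - a)) with hτdef
      have hτle : ∀ u, u ≤ a → τ u = γ u := by
        intro u hu; simp only [hτdef]; rw [if_pos hu]
      have hτgt : ∀ u, a < u → τ u = lam (D - a - (u - a)) := by
        intro u hu; simp only [hτdef]; rw [if_neg (not_le.mpr hu)]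
      have hDa : D - a = 2*L - s' := by linarith
      have hτgeo : ∀ u ∈ Icc (0:ℝ) D, ∀ v ∈ Icc (0:ℝ) D, dist (τ u) (τ v) = |u - v| := by
        have h₁' : ∀ u ∈ Icc (0:ℝ) a, ∀ v ∈ Icc (0:ℝ) a,
            dist (γ u) (γ v) = |u - v| := fun u hu v hv => hγ u hu.1 v hv.1
        have h₂' : ∀ u ∈ Icc (0:ℝ) (D - a), ∀ v ∈ Icc (0:ℝ) (D - a),
            dist ((fun t => lam (D - a - t)) u) ((fun t => lam (D - a - t)) v)
              = |u - v| := by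
          intro u hu v hv
          show dist (lam (D - a - u)) (lam (D - a - v)) = |u - v|
          rw [hlgeo (D - a - u) ⟨by linarith [hu.2], by linarith [hu.1, ha.le]⟩
            (D - a - v) ⟨by linarith [hv.2], by linarith [hv.1, ha.le]⟩,
            show D - a - u - (D - a - v) = v - u by ring, abs_sub_comm]
        have hjoin' : γ a = (fun t => lam (D - a - t)) 0 := by
          show γ a = lam (D - a - 0)
          rw [sub_zero, hDa]
          exact h1.symm
        have hend' : dist (γ 0) ((fun t => lam (D - a - t)) (D - a)) = a + (D - a) := by
          show dist (γ 0) (lam (D - a - (D - a))) = a + (D - a)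
          rw [show D - a - (D - a) = 0 by ring, hl0, hy, dist_comm, ← hD]
          ring
        have := concat_geo ha.le (by linarith [hs'.2] : (0:ℝ) ≤ D - a) h₁' h₂' hjoin' hend'
          τ hτle hτgt
        rwa [show a + (D - a) = D by ring] at this
      have heq3 := hnb D τ γ hτgeo (fun u hu v hv => hγ u hu.1 v hv.1)
        ⟨a, ha, fun t ht => hτle t ht.2⟩
      have fact2 : ∀ u ∈ Icc (0:ℝ) (2*L - s'), lam u = γ (D - u) := by
        intro u hu
        rcases eq_or_lt_of_le hu.2 with hue | hue
        · rw [hue, show D - (2*L - s') = a by linarith]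
          exact h1
        · have hmem : D - u ∈ Icc (0:ℝ) D := ⟨by linarith, by linarith [hu.1]⟩
          have h3 : τ (D - u) = γ (D - u) := heq3 (D - u) hmem
          rw [hτgt (D - u) (by linarith), show D - a - (D - u - a) = u by ring] at h3
          exact h3
      have fact3 : ∀ u ∈ Icc (0:ℝ) (2*L - s'), h (s' + u) = γ (D - u) := by
        intro u hu
        exact (heq2 u ⟨hu.1, le_min (by linarith [hu.2]) hu.2⟩).symm.trans (fact2 u hu)
      -- final nonbranching at γ a : h backwards vs γ forwards
      have hα : ∀ u ∈ Icc (0:ℝ) (2*L), ∀ v ∈ Icc (0:ℝ) (2*L),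
          dist ((fun t => h (2*L - t)) u) ((fun t => h (2*L - t)) v) = |u - v| := by
        intro u hu v hv
        show dist (h (2*L - u)) (h (2*L - v)) = |u - v|
        rw [hhgeo (2*L - u) ⟨by linarith [hu.2], by linarith [hu.1]⟩
          (2*L - v) ⟨by linarith [hv.2], by linarith [hv.1]⟩,
          show 2*L - u - (2*L - v) = v - u by ring, abs_sub_comm]
      have hβ : ∀ u ∈ Icc (0:ℝ) (2*L), ∀ v ∈ Icc (0:ℝ) (2*L),
          dist ((fun t => γ (a + t)) u) ((fun t => γ (a + t)) v) = |u - v| := by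
        intro u hu v hv
        show dist (γ (a + u)) (γ (a + v)) = |u - v|
        rw [hγ (a + u) (by linarith [hu.1]) (a + v) (by linarith [hv.1]),
          add_sub_add_left_eq_sub]
      have hagree4 : ∀ t ∈ Icc (0:ℝ) (2*L - s'),
          (fun t => h (2*L - t)) t = (fun t => γ (a + t)) t := by
        intro t ht
        show h (2*L - t) = γ (a + t)
        have := fact3 (2*L - s' - t) ⟨by linarith [ht.2], by linarith [ht.1]⟩
        rw [show s' + (2*L - s' - t) = 2*L - t by ring,
          show D - (2*L - s' - t) = a + t by linarith] at this
        exact this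
      have heq4 := hnb (2*L) (fun t => h (2*L - t)) (fun t => γ (a + t)) hα hβ
        ⟨2*L - s', by linarith [hs.2], hagree4⟩ (2*L) ⟨h2L, le_rfl⟩
      have h4 : h (2*L - 2*L) = γ (a + 2*L) := heq4
      rw [show 2*L - 2*L = 0 by ring, hh0] at h4
      have h5 : dist y q = a + 2*L := by
        rw [h4, ← hy, hγ 0 le_rfl (a + 2*L) (by linarith), zero_sub, abs_neg,
          abs_of_nonneg (by linarith)]
      rw [hq] at h5
      linarith


theorem stmt13 {Y : Type*} [MetricSpace Y] [ProperSpace Y]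
    (hgeo : ∀ x z : Y, ∃ c : ℝ → Y, c 0 = x ∧ c (dist x z) = z ∧
      ∀ s ∈ Icc (0:ℝ) (dist x z), ∀ t ∈ Icc (0:ℝ) (dist x z),
        dist (c s) (c t) = |s - t|)
    (hnb : ∀ (T : ℝ) (c₁ c₂ : ℝ → Y),
      (∀ s ∈ Icc (0:ℝ) T, ∀ t ∈ Icc (0:ℝ) T, dist (c₁ s) (c₁ t) = |s - t|) →
      (∀ s ∈ Icc (0:ℝ) T, ∀ t ∈ Icc (0:ℝ) T, dist (c₂ s) (c₂ t) = |s - t|) →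
      (∃ ε > (0:ℝ), ∀ t ∈ Icc (0:ℝ) ε, c₁ t = c₂ t) →
      ∀ t ∈ Icc (0:ℝ) T, c₁ t = c₂ t)
    (γ : ℝ → Y) (hγ : ∀ s ≥ (0:ℝ), ∀ t ≥ (0:ℝ), dist (γ s) (γ t) = |s - t|)
    (y : Y) (hy : γ 0 = y) (a : ℝ) (ha : 0 < a)
    (q : Y) (hq : dist y q = a) (hqγ : q ≠ γ a)
    (L : ℝ) (hL : 2 * L = dist q (γ a))
    (h : ℝ → Y) (hh0 : h 0 = q) (hh1 : h (2 * L) = γ a)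
    (hhgeo : ∀ s ∈ Icc (0:ℝ) (2 * L), ∀ t ∈ Icc (0:ℝ) (2 * L),
      dist (h s) (h t) = |s - t|)
    (hyh : y ∉ h '' Icc 0 (2 * L))
    (q₁ q₂ : Y) (hq₁ : q₁ ∈ h '' Icc L (2 * L)) (hq₂ : q₂ ∈ h '' Icc L (2 * L))
    (hne : q₁ ≠ q₂)
    (l₁ l₂ : ℝ → Y)
    (hl₁0 : l₁ 0 = q₁) (hl₁1 : l₁ (dist q₁ y) = y)
    (hl₁geo : ∀ s ∈ Icc (0:ℝ) (dist q₁ y), ∀ t ∈ Icc (0:ℝ) (dist q₁ y),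
      dist (l₁ s) (l₁ t) = |s - t|)
    (hl₂0 : l₂ 0 = q₂) (hl₂1 : l₂ (dist q₂ y) = y)
    (hl₂geo : ∀ s ∈ Icc (0:ℝ) (dist q₂ y), ∀ t ∈ Icc (0:ℝ) (dist q₂ y),
      dist (l₂ s) (l₂ t) = |s - t|) :
    (l₁ '' Icc 0 (dist q₁ y)) ∩ (l₂ '' Icc 0 (dist q₂ y)) = {y} := by
  have hLpos : 0 < L := by
    have : 0 < dist q (γ a) := dist_pos.mpr hqγ
    linarith
  obtain ⟨s₁, hs₁, hhs₁⟩ := hq₁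
  obtain ⟨s₂, hs₂, hhs₂⟩ := hq₂
  have hne' : s₁ ≠ s₂ := fun e => hne (by rw [← hhs₁, ← hhs₂, e])
  apply Subset.antisymm
  · rintro p ⟨⟨u₁, hu₁, hpu₁⟩, u₂, hu₂, hpu₂⟩
    rw [mem_singleton_iff]
    by_contra hpy
    rcases le_total (dist q₁ y) (dist q₂ y) with hle | hle
    · have hon := aux_on hnb y q₁ q₂ l₁ l₂ hl₁0 hl₁1 hl₁geo hl₂0 hl₂1 hl₂geo hle
        p hpy u₁ hu₁ hpu₁ u₂ hu₂ hpu₂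
      have hd21 : dist q₂ q₁ = dist q₂ y - dist q₁ y := by
        have h' := hl₂geo 0 ⟨le_rfl, dist_nonneg⟩ (dist q₂ y - dist q₁ y)
          ⟨by linarith [(dist_nonneg : (0:ℝ) ≤ dist q₁ y)],
           by linarith [(dist_nonneg : (0:ℝ) ≤ dist q₁ y)]⟩
        rwa [hl₂0, hon, zero_sub, abs_neg, abs_of_nonneg (by linarith)] at h' 
      have hk : |s₁ - s₂| = dist q₂ y - dist q₁ y := by
        rw [← hd21, ← hhs₁, ← hhs₂, dist_comm,
          hhgeo s₁ ⟨hLpos.le.trans hs₁.1, hs₁.2⟩ s₂ ⟨hLpos.le.trans hs₂.1, hs₂.2⟩]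
      exact core13 hnb γ hγ y hy a ha q hq L hLpos h hh0 hh1 hhgeo hyh s₁ s₂ hs₁ hs₂
        hne' l₂ (dist q₂ y) (by rw [hhs₂]) hl₂geo (by rw [hl₂0, hhs₂]) hl₂1
        (by rw [hk]; linarith [(dist_nonneg : (0:ℝ) ≤ dist q₁ y)])
        (by rw [hk, hon, hhs₁])
    · have hon := aux_on hnb y q₂ q₁ l₂ l₁ hl₂0 hl₂1 hl₂geo hl₁0 hl₁1 hl₁geo hle
        p hpy u₂ hu₂ hpu₂ u₁ hu₁ hpu₁
      have hd12 : dist q₁ q₂ = dist q₁ y - dist q₂ y := by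
        have h' := hl₁geo 0 ⟨le_rfl, dist_nonneg⟩ (dist q₁ y - dist q₂ y)
          ⟨by linarith [(dist_nonneg : (0:ℝ) ≤ dist q₂ y)],
           by linarith [(dist_nonneg : (0:ℝ) ≤ dist q₂ y)]⟩
        rwa [hl₁0, hon, zero_sub, abs_neg, abs_of_nonneg (by linarith)] at h' 
      have hk : |s₂ - s₁| = dist q₁ y - dist q₂ y := by
        rw [← hd12, ← hhs₁, ← hhs₂, dist_comm,
          hhgeo s₂ ⟨hLpos.le.trans hs₂.1, hs₂.2⟩ s₁ ⟨hLpos.le.trans hs₁.1, hs₁.2⟩]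
      exact core13 hnb γ hγ y hy a ha q hq L hLpos h hh0 hh1 hhgeo hyh s₂ s₁ hs₂ hs₁
        (Ne.symm hne') l₁ (dist q₁ y) (by rw [hhs₁]) hl₁geo (by rw [hl₁0, hhs₁]) hl₁1
        (by rw [hk]; linarith [(dist_nonneg : (0:ℝ) ≤ dist q₂ y)])
        (by rw [hk, hon, hhs₂])
  · rintro p hp
    rw [mem_singleton_iff] at hp
    rw [hp]
    exact ⟨⟨dist q₁ y, ⟨dist_nonneg, le_rfl⟩, hl₁1⟩,
      ⟨dist q₂ y, ⟨dist_nonneg, le_rfl⟩, hl₂1⟩⟩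
end

section
/- Let $(Y,y)$ be a proper, geodesic, nonbranching, noncompact pointed metric space such that every geodesic segment extends within minimizers appropriately (as available in Ricci limit spaces). Define $f(R)=\#\,\partial B_R(y)\in\mathbb{N}\cup\{\infty\}$ for $R>0$, together with the splitting property: if $Y$ contains a line then $Y$ is isometric to $\mathbb{R}\times N$ for some metric space $N$. Then exactly one of the following holds: (1) $f\equiv 1$ and $(Y,y)\cong([0,\infty),0)$; (2) there is $a>0$ with $f=2$ on $(0,a]$, $f=1$ on $(a,\infty)$, and $(Y,y)\cong([0,\infty),a)$; (3) $f\equiv 2$ and $(Y,y)\cong(\mathbb{R},0)$; (4) $f\equiv\infty$. -/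
/-!
If some sphere `S(y, R₀)` is finite, push spheres inwards along geodesics from `y`: by
nonbranching these maps are injective, so the cardinalities of the spheres decrease and become
constant, equal to some `k ≥ 1`, beyond a radius `N`. From then on every geodesic from `y` to
`S(y, N)` extends indefinitely and uniquely, so outside the ball of radius `N` the space is the
disjoint union of `k` rays from `y`.

If `k = 1`, the Busemann function of the ray embeds the space isometrically into `ℝ`; its image is
a closed interval containing `[0, ∞)`, which gives the three one-dimensional cases. If `k ≥ 2`, a
geodesic between two of the rays has to pass through the ball of radius `N` and enters and leaves
it along the rays, so the rays diverge at full speed and, joined by a segment, form a line. The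
splitting `Y ≅ ℝ × N'` then has `N'` a point, since otherwise `N'` is connected and every sphere
about `y` contains a copy of a ball of `N'`, contradicting finiteness of `S(y, R₀)`.
-/

open Set Metric

theorem LipschitzOnWith.congr {α β : Type*} [PseudoEMetricSpace α] [PseudoEMetricSpace β]
    {K : NNReal} {f g : α → β} {s : Set α} (hf : LipschitzOnWith K f s) (h : EqOn f g s) :
    LipschitzOnWith K g s := fun x hx z hz => by
  rw [← h hx, ← h hz]
  exact hf hx hz

theorem exists_forall_ge_eq_of_antitoneOn {α : Type*} [LinearOrder α] {f : α → ℕ} {a : α}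
    (hf : AntitoneOn f (Ici a)) : ∃ b, a ≤ b ∧ ∀ u, b ≤ u → f u = f b := by
  obtain ⟨b, hb, hmin⟩ : ∃ b ∈ Ici a, f b = sInf (f '' Ici a) :=
    Nat.sInf_mem ⟨f a, mem_image_of_mem f self_mem_Ici⟩
  refine ⟨b, hb, fun u hu => le_antisymm (hf hb (le_trans hb hu) hu) ?_⟩
  rw [hmin]
  exact Nat.sInf_le ⟨u, le_trans hb hu, rfl⟩

theorem exists_first_eq_of_continuousOn {f : ℝ → ℝ} {a b c : ℝ} (hab : a ≤ b)
    (hf : ContinuousOn f (Icc a b)) (ha : c ≤ f a) (hb : f b ≤ c) :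
    ∃ t ∈ Icc a b, f t = c ∧ ∀ s ∈ Icc a t, c ≤ f s := by
  let C := Icc a b ∩ f ⁻¹' Iic c
  have hC : IsClosed C := hf.preimage_isClosed_of_isClosed isClosed_Icc isClosed_Iic
  have hCbdd : BddBelow C := bddBelow_Icc.mono inter_subset_left
  have ht : sInf C ∈ C := hC.csInf_mem ⟨b, ⟨hab, le_rfl⟩, hb⟩ hCbdd
  obtain ⟨s, hs, hfs⟩ := intermediate_value_Icc' ht.1.1
    (hf.mono (Icc_subset_Icc_right ht.1.2)) ⟨ht.2, ha⟩
  have hst : s = sInf C :=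
    le_antisymm hs.2 (csInf_le hCbdd ⟨⟨hs.1, hs.2.trans ht.1.2⟩, hfs.le⟩)
  refine ⟨sInf C, ht.1, hst ▸ hfs, fun s' hs' => ?_⟩
  rcases hs'.2.lt_or_eq with h | h
  · by_contra! h'
    exact (csInf_le hCbdd ⟨⟨hs'.1, h.le.trans ht.1.2⟩, h'.le⟩).not_gt h
  · rw [h, ← hst, hfs]

theorem IsPreconnected.subset_of_finite_closed_cover {X ι : Type*} [TopologicalSpace X]
    {s : Set X} (hs : IsPreconnected s) {I : Set ι} (hI : I.Finite) {A : ι → Set X}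
    (hA : ∀ i ∈ I, IsClosed (A i)) (hcov : s ⊆ ⋃ i ∈ I, A i)
    (hdisj : ∀ x ∈ s, ∀ i ∈ I, ∀ j ∈ I, x ∈ A i → x ∈ A j → i = j)
    {i : ι} (hi : i ∈ I) {x : X} (hx : x ∈ s) (hxi : x ∈ A i) : s ⊆ A i := by
  have hB : IsClosed (⋃ j ∈ I \ {i}, A j) := hI.sdiff.isClosed_biUnion fun j hj => hA j hj.1
  have hne : ∀ z ∈ s, ∀ j ∈ I \ {i}, z ∈ A j → z ∉ A i := fun z hz j hj hzj hzi =>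
    hj.2 (hdisj z hz j hj.1 i hi hzj hzi)
  refine (isPreconnected_iff_subset_of_disjoint_closed.1 hs _ _ (hA i hi) hB ?_ ?_).resolve_right
    fun h => ?_
  · intro z hz
    obtain ⟨j, hj, hzj⟩ := mem_iUnion₂.1 (hcov hz)
    by_cases hji : j = i
    · exact .inl (hji ▸ hzj)
    · exact .inr (mem_iUnion₂.2 ⟨j, ⟨hj, hji⟩, hzj⟩)
  · refine eq_empty_of_forall_notMem fun z ⟨hz, hzi, hzB⟩ => ?_
    obtain ⟨j, hj, hzj⟩ := mem_iUnion₂.1 hzB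
    exact hne z hz j hj hzj hzi
  · obtain ⟨j, hj, hxj⟩ := mem_iUnion₂.1 (h hx)
    exact hne x hx j hj hxj hxi

section

variable {Y : Type*} [MetricSpace Y]

theorem lipschitzOnWith_one_union {f : ℝ → Y} {s t : Set ℝ} {a : ℝ}
    (hs : LipschitzOnWith 1 f s) (ht : LipschitzOnWith 1 f t) (has : a ∈ s) (hat : a ∈ t)
    (hsa : ∀ x ∈ s, x ≤ a) (hta : ∀ x ∈ t, a ≤ x) : LipschitzOnWith 1 f (s ∪ t) := by
  have cross : ∀ x ∈ s, ∀ z ∈ t, dist (f x) (f z) ≤ dist x z := fun x hx z hz => by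
    have h1 := hs.dist_le_mul x hx a has
    have h2 := ht.dist_le_mul a hat z hz
    simp only [NNReal.coe_one, one_mul, Real.dist_eq] at h1 h2 ⊢
    rw [abs_of_nonpos (by linarith [hsa x hx])] at h1
    rw [abs_of_nonpos (by linarith [hta z hz])] at h2
    rw [abs_of_nonpos (by linarith [hsa x hx, hta z hz])]
    linarith [dist_triangle (f x) (f a) (f z)]
  refine LipschitzOnWith.of_dist_le_mul fun x hx z hz => ?_
  rw [NNReal.coe_one, one_mul]
  rcases hx with hx | hx <;> rcases hz with hz | hz
  · simpa using hs.dist_le_mul x hx z hz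
  · exact cross x hx z hz
  · rw [dist_comm, dist_comm x]; exact cross z hz x hx
  · simpa using ht.dist_le_mul x hx z hz

theorem dist_eq_of_lipschitzOnWith_one {f : ℝ → Y} {s : Set ℝ} (hf : LipschitzOnWith 1 f s)
    {a b u v : ℝ} (ha : a ∈ s) (hb : b ∈ s) (hu : u ∈ s) (hv : v ∈ s)
    (hau : a ≤ u) (huv : u ≤ v) (hvb : v ≤ b) (hab : b - a ≤ dist (f a) (f b)) :
    dist (f u) (f v) = v - u := by
  have h1 := hf.dist_le_mul a ha u hu
  have h2 := hf.dist_le_mul u hu v hv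
  have h3 := hf.dist_le_mul v hv b hb
  simp only [NNReal.coe_one, one_mul, Real.dist_eq] at h1 h2 h3
  rw [abs_of_nonpos (by linarith)] at h1 h2 h3
  linarith [dist_triangle4 (f a) (f u) (f v) (f b)]

theorem dist_eq_abs_sub_of_lipschitzWith_one {ℓ : ℝ → Y} (hℓ : LipschitzWith 1 ℓ) {A B : ℝ}
    (hfar : ∀ s ≤ A, ∀ t ≥ B, dist (ℓ s) (ℓ t) = t - s) (s t : ℝ) :
    dist (ℓ s) (ℓ t) = |s - t| := by
  wlog hst : s ≤ t generalizing s t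
  · rw [dist_comm, abs_sub_comm]
    exact this t s (le_of_not_ge hst)
  rw [abs_sub_comm, abs_of_nonneg (sub_nonneg.2 hst)]
  exact dist_eq_of_lipschitzOnWith_one hℓ.lipschitzOnWith (mem_univ _) (mem_univ _) (mem_univ _)
    (mem_univ _) (min_le_left s A) hst (le_max_left t B)
    (hfar _ (min_le_right s A) _ (le_max_right t B)).ge

end

namespace SphereCount

variable {Y : Type*} [MetricSpace Y]

def IsGeodesicSegment (c : ℝ → Y) (T : ℝ) : Prop :=
  ∀ s ∈ Icc (0:ℝ) T, ∀ t ∈ Icc (0:ℝ) T, dist (c s) (c t) = |s - t|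

def IsGeodesicRay (c : ℝ → Y) : Prop :=
  ∀ s, 0 ≤ s → ∀ t, 0 ≤ t → dist (c s) (c t) = |s - t|

variable (Y) in
def GeodesicSpace : Prop :=
  ∀ x z : Y, ∃ c : ℝ → Y, c 0 = x ∧ c (dist x z) = z ∧ IsGeodesicSegment c (dist x z)

variable (Y) in
def NonBranching : Prop :=
  ∀ (T : ℝ) (c₁ c₂ : ℝ → Y), IsGeodesicSegment c₁ T → IsGeodesicSegment c₂ T →
    (∃ ε > (0:ℝ), EqOn c₁ c₂ (Icc 0 ε)) → EqOn c₁ c₂ (Icc 0 T)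

namespace IsGeodesicSegment

variable {c : ℝ → Y} {T : ℝ}

theorem mono (h : IsGeodesicSegment c T) {T' : ℝ} (hT : T' ≤ T) : IsGeodesicSegment c T' :=
  fun s hs t ht => h s ⟨hs.1, hs.2.trans hT⟩ t ⟨ht.1, ht.2.trans hT⟩

theorem reverse (h : IsGeodesicSegment c T) : IsGeodesicSegment (fun t => c (T - t)) T := by
  intro s hs t ht
  rw [h (T - s) ⟨by linarith [hs.2], by linarith [hs.1]⟩ (T - t)
    ⟨by linarith [ht.2], by linarith [ht.1]⟩, abs_sub_comm]
  ring_nf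

theorem dist_eq (h : IsGeodesicSegment c T) {s t : ℝ} (hs : 0 ≤ s) (hst : s ≤ t) (ht : t ≤ T) :
    dist (c s) (c t) = t - s := by
  rw [h s ⟨hs, hst.trans ht⟩ t ⟨hs.trans hst, ht⟩, abs_sub_comm, abs_of_nonneg (by linarith)]

theorem lipschitzOnWith (h : IsGeodesicSegment c T) : LipschitzOnWith 1 c (Icc 0 T) :=
  LipschitzOnWith.of_dist_le_mul fun s hs t ht => by
    rw [h s hs t ht, NNReal.coe_one, one_mul, Real.dist_eq]

theorem continuousOn (h : IsGeodesicSegment c T) : ContinuousOn c (Icc 0 T) :=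
  h.lipschitzOnWith.continuousOn

end IsGeodesicSegment

theorem isGeodesicSegment_of_lipschitzOnWith {c : ℝ → Y} {T : ℝ}
    (hc : LipschitzOnWith 1 c (Icc 0 T)) (hT : T ≤ dist (c 0) (c T)) : IsGeodesicSegment c T := by
  intro s hs t ht
  wlog hst : s ≤ t generalizing s t
  · rw [dist_comm, abs_sub_comm]
    exact this t ht s hs (le_of_not_ge hst)
  have h0T : (0:ℝ) ≤ T := hs.1.trans hs.2
  rw [dist_eq_of_lipschitzOnWith_one hc ⟨le_rfl, h0T⟩ ⟨h0T, le_rfl⟩ hs ht hs.1 hst ht.2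
    (by simpa using hT), abs_sub_comm, abs_of_nonneg (by linarith)]

theorem IsGeodesicSegment.ite {c c' : ℝ → Y} {T u : ℝ} (hc : IsGeodesicSegment c T)
    (hc' : IsGeodesicSegment c' T) (h0 : c 0 = c' 0) (hu : c u = c' u) (hu0 : 0 ≤ u)
    (huT : u ≤ T) : IsGeodesicSegment (fun t => if t ≤ u then c' t else c t) T := by
  set d : ℝ → Y := fun t => if t ≤ u then c' t else c t
  have hdc' : EqOn c' d (Icc 0 u) := fun t ht => (if_pos ht.2).symm
  have hdc : EqOn c d (Icc u T) := fun t ht => by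
    rcases ht.1.eq_or_lt with rfl | h
    · exact hu.trans (if_pos le_rfl).symm
    · exact (if_neg (not_le.2 h)).symm
  refine isGeodesicSegment_of_lipschitzOnWith ?_ ?_
  · rw [← Icc_union_Icc_eq_Icc hu0 huT]
    exact lipschitzOnWith_one_union
      ((hc'.lipschitzOnWith.mono (Icc_subset_Icc_right huT)).congr hdc')
      ((hc.lipschitzOnWith.mono (Icc_subset_Icc_left hu0)).congr hdc)
      ⟨hu0, le_rfl⟩ ⟨le_rfl, huT⟩ (fun t ht => ht.2) fun t ht => ht.1
  · rw [← hdc' ⟨le_rfl, hu0⟩, ← hdc ⟨huT, le_rfl⟩, ← h0, hc.dist_eq le_rfl (hu0.trans huT) le_rfl,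
      sub_zero]

/-- Glue the first piece of one segment to the last piece of the other and apply nonbranching
from both ends. -/
theorem NonBranching.eqOn_of_eq (hnb : NonBranching Y) {c c' : ℝ → Y} {T u : ℝ}
    (hc : IsGeodesicSegment c T) (hc' : IsGeodesicSegment c' T) (h0 : c 0 = c' 0)
    (hu : c u = c' u) (hu0 : 0 < u) (huT : u < T) : EqOn c c' (Icc 0 T) := by
  set d : ℝ → Y := fun t => if t ≤ u then c' t else c t
  have hd : IsGeodesicSegment d T := hc.ite hc' h0 hu hu0.le huT.le
  have hdc' : EqOn d c' (Icc 0 T) := hnb T d c' hd hc' ⟨u, hu0, fun t ht => if_pos ht.2⟩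
  have hdc : EqOn (fun t => d (T - t)) (fun t => c (T - t)) (Icc 0 T) := by
    refine hnb T _ _ hd.reverse hc.reverse ⟨T - u, sub_pos.2 huT, fun t ht => ?_⟩
    show d (T - t) = c (T - t)
    by_cases htu : T - t ≤ u
    · rw [show T - t = u by linarith [ht.2]]
      exact (if_pos le_rfl).trans hu.symm
    · exact if_neg htu
  intro t ht
  have h := hdc (x := T - t) ⟨by linarith [ht.2], by linarith [ht.1]⟩
  simp only [sub_sub_cancel] at h
  rw [← h, hdc' ht]

namespace IsGeodesicRay

variable {γ : ℝ → Y}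

theorem isGeodesicSegment (hγ : IsGeodesicRay γ) (T : ℝ) : IsGeodesicSegment γ T :=
  fun s hs t ht => hγ s hs.1 t ht.1

theorem dist_apply_eq {y : Y} (hγ : IsGeodesicRay γ) (hγ0 : γ 0 = y) {t : ℝ} (ht : 0 ≤ t) :
    dist (γ t) y = t := by
  subst hγ0
  rw [hγ t ht 0 le_rfl, sub_zero, abs_of_nonneg ht]

theorem dist_eq (hγ : IsGeodesicRay γ) {s t : ℝ} (hs : 0 ≤ s) (hst : s ≤ t) :
    dist (γ s) (γ t) = t - s :=
  (hγ.isGeodesicSegment t).dist_eq hs hst le_rfl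

theorem comp_add (hγ : IsGeodesicRay γ) {a : ℝ} (ha : 0 ≤ a) :
    IsGeodesicRay fun t => γ (a + t) := fun s hs t ht => by
  rw [hγ _ (by linarith) _ (by linarith), add_sub_add_left_eq_sub]

theorem lipschitzOnWith_comp (hγ : IsGeodesicRay γ) {s : Set ℝ} {f : ℝ → ℝ}
    (hf : MapsTo f s (Ici 0)) (hf' : Isometry f) : LipschitzOnWith 1 (fun t => γ (f t)) s :=
  LipschitzOnWith.of_dist_le_mul fun a ha b hb => by
    rw [hγ _ (hf ha) _ (hf hb), ← Real.dist_eq, hf'.dist_eq, NNReal.coe_one, one_mul]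

theorem continuousOn (hγ : IsGeodesicRay γ) : ContinuousOn γ (Ici 0) :=
  (hγ.lipschitzOnWith_comp (fun _ => id) isometry_id).continuousOn

end IsGeodesicRay

theorem NonBranching.exists_isGeodesicRay (hnb : NonBranching Y) {y x : Y} {N : ℝ} (hN : 0 < N)
    (hex : ∀ T > N, ∃ c : ℝ → Y, c 0 = y ∧ c N = x ∧ IsGeodesicSegment c T) :
    ∃ γ : ℝ → Y, IsGeodesicRay γ ∧ γ 0 = y ∧ γ N = x := by
  have : Nonempty Y := ⟨y⟩
  choose! c hc0 hcN hc using hex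
  have hagree : ∀ T T', N < T → T ≤ T' → EqOn (c T) (c T') (Icc 0 T) := fun T T' hT hTT' =>
    hnb.eqOn_of_eq (hc T hT) ((hc T' (hT.trans_le hTT')).mono hTT')
      ((hc0 T hT).trans (hc0 T' (hT.trans_le hTT')).symm)
      ((hcN T hT).trans (hcN T' (hT.trans_le hTT')).symm) hN hT
  set γ : ℝ → Y := fun t => c (max t N + 1) t
  have hγ : ∀ T > N, ∀ t ∈ Icc 0 T, γ t = c T t := fun T hT t ht => by
    have hN' : N < max t N + 1 := by linarith [le_max_right t N]
    rcases le_total (max t N + 1) T with h | h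
    · exact hagree _ _ hN' h ⟨ht.1, by linarith [le_max_left t N]⟩
    · exact (hagree T _ hT h ht).symm
  have hN1 : N < N + 1 := by linarith
  refine ⟨γ, fun s hs t ht => ?_, ?_, ?_⟩
  · have hT : N < max (max s t) N + 1 := by linarith [le_max_right (max s t) N]
    have hsT : s ≤ max (max s t) N + 1 := by
      linarith [le_max_left s t, le_max_left (max s t) N]
    have htT : t ≤ max (max s t) N + 1 := by
      linarith [le_max_right s t, le_max_left (max s t) N]
    rw [hγ _ hT s ⟨hs, hsT⟩, hγ _ hT t ⟨ht, htT⟩]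
    exact hc _ hT s ⟨hs, hsT⟩ t ⟨ht, htT⟩
  · rw [hγ (N + 1) hN1 0 ⟨le_rfl, by linarith⟩, hc0 _ hN1]
  · rw [hγ (N + 1) hN1 N ⟨hN.le, by linarith⟩, hcN _ hN1]

/-- The concatenation of the reversed first ray, the segment and the second ray is `1`-Lipschitz,
and its points on the two rays are at full distance. -/
theorem exists_line_of_rays {γ₁ γ₂ m : ℝ → Y} {δ : ℝ} (h₁ : IsGeodesicRay γ₁)
    (h₂ : IsGeodesicRay γ₂) (hm : IsGeodesicSegment m δ) (hm0 : m 0 = γ₁ 0) (hmδ : m δ = γ₂ 0)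
    (hfar : ∀ s ≥ 0, ∀ t ≥ 0, dist (γ₁ s) (γ₂ t) = s + t + δ) :
    ∃ ℓ : ℝ → Y, ∀ s t, dist (ℓ s) (ℓ t) = |s - t| := by
  have hδ : 0 ≤ δ := by linarith [hfar 0 le_rfl 0 le_rfl, dist_nonneg (x := γ₁ 0) (y := γ₂ 0)]
  set ℓ : ℝ → Y := fun t => if t ≤ 0 then γ₁ (-t) else if t ≤ δ then m t else γ₂ (t - δ)
  have hℓ₁ : EqOn (fun t => γ₁ (-t)) ℓ (Iic 0) := fun t ht => (if_pos ht).symm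
  have hℓm : EqOn m ℓ (Icc 0 δ) := fun t ht => by
    rcases ht.1.eq_or_lt with rfl | ht0
    · simp only [ℓ, if_pos le_rfl, neg_zero, hm0]
    · exact ((if_neg (not_le.2 ht0)).trans (if_pos ht.2)).symm
  have hℓ₂ : EqOn (fun t => γ₂ (t - δ)) ℓ (Ici δ) := fun t ht => by
    simp only [ℓ]
    split_ifs with h0 hδt
    · obtain rfl : δ = 0 := le_antisymm (le_trans ht h0) hδ
      rw [show t = 0 by linarith [mem_Ici.1 ht], neg_zero, sub_zero, ← hm0, ← hmδ]
    · rw [le_antisymm hδt ht, sub_self, hmδ]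
    · rfl
  have hlip₁ : LipschitzOnWith 1 ℓ (Iic 0) :=
    (h₁.lipschitzOnWith_comp (fun _ ht => neg_nonneg.2 (mem_Iic.1 ht)) isometry_neg).congr hℓ₁
  have hlipm : LipschitzOnWith 1 ℓ (Icc 0 δ) := hm.lipschitzOnWith.congr hℓm
  have hlip₂ : LipschitzOnWith 1 ℓ (Ici δ) :=
    (h₂.lipschitzOnWith_comp (f := fun t => t - δ) (fun _ ht => sub_nonneg.2 (mem_Ici.1 ht))
      (Isometry.of_dist_eq fun _ _ => by simp only [Real.dist_eq, sub_sub_sub_cancel_right])).congr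
      hℓ₂
  have hℓlip : LipschitzOnWith 1 ℓ univ := by
    rw [← Iic_union_Ici (a := δ), ← Iic_union_Icc_eq_Iic hδ]
    refine lipschitzOnWith_one_union (lipschitzOnWith_one_union hlip₁ hlipm self_mem_Iic
      ⟨le_rfl, hδ⟩ (fun _ => id) fun _ h => h.1) hlip₂ (Or.inr ⟨hδ, le_rfl⟩) self_mem_Ici
      (fun t ht => ?_) fun _ => id
    rcases ht with ht | ht
    exacts [(mem_Iic.1 ht).trans hδ, ht.2]
  have hℓfar : ∀ s ≤ 0, ∀ t ≥ δ, dist (ℓ s) (ℓ t) = t - s := fun s hs t ht => by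
    rw [← hℓ₁ hs, ← hℓ₂ ht, hfar _ (neg_nonneg.2 hs) _ (sub_nonneg.2 ht)]
    ring
  exact ⟨ℓ, dist_eq_abs_sub_of_lipschitzWith_one (lipschitzOnWith_univ.1 hℓlip) hℓfar⟩

namespace GeodesicSpace

theorem preconnectedSpace (hgeo : GeodesicSpace Y) : PreconnectedSpace Y := by
  refine ⟨isPreconnected_of_forall_pair fun x _ z _ => ?_⟩
  obtain ⟨c, hc0, hcz, hc⟩ := hgeo x z
  exact ⟨c '' Icc 0 (dist x z), subset_univ _, ⟨0, ⟨le_rfl, dist_nonneg⟩, hc0⟩,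
    ⟨dist x z, ⟨dist_nonneg, le_rfl⟩, hcz⟩, isPreconnected_Icc.image _ hc.continuousOn⟩

theorem sphere_nonempty [ProperSpace Y] (hgeo : GeodesicSpace Y) (hnc : ¬ CompactSpace Y)
    (y : Y) {u : ℝ} (hu : 0 ≤ u) : (sphere y u).Nonempty := by
  obtain ⟨z, hz⟩ : ∃ z, u < dist z y := by
    by_contra! h
    exact hnc (compactSpace_iff_isBounded_univ.2
      ((isBounded_iff_subset_closedBall y).2 ⟨u, fun z _ => h z⟩))
  obtain ⟨c, hc0, -, hc⟩ := hgeo y z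
  refine ⟨c u, ?_⟩
  rw [mem_sphere, ← hc0, dist_comm, hc.dist_eq le_rfl hu (by rw [dist_comm]; exact hz.le), sub_zero]

end GeodesicSpace

/-- Along chosen geodesics from `y`, spheres of larger radius inject into spheres of smaller
radius (by nonbranching), so the finite sphere counts decrease and stabilize; from then on the
injections are bijections. -/
theorem exists_radius_segments_extend (hgeo : GeodesicSpace Y) (hnb : NonBranching Y) {y : Y}
    {R₀ : ℝ} (hR₀ : 0 < R₀) (hfin : (sphere y R₀).Finite) :
    ∃ N ≥ R₀, (sphere y N).Finite ∧ ∀ x ∈ sphere y N, ∀ T > N,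
      ∃ c : ℝ → Y, c 0 = y ∧ c N = x ∧ IsGeodesicSegment c T := by
  choose seg hseg0 hsegz hseg using hgeo y
  have hdist : ∀ {R : ℝ}, ∀ z ∈ sphere y R, dist y z = R := fun z hz => by
    rw [dist_comm]; exact hz
  have hsegR : ∀ {R : ℝ}, ∀ z ∈ sphere y R, seg z R = z := fun z hz => by
    rw [← hdist z hz, hsegz]
  have hseg' : ∀ {R : ℝ}, ∀ z ∈ sphere y R, IsGeodesicSegment (seg z) R := fun z hz => by
    rw [← hdist z hz]; exact hseg z
  have hmaps : ∀ {R R' : ℝ}, 0 ≤ R' → R' ≤ R →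
      MapsTo (fun z => seg z R') (sphere y R) (sphere y R') := fun hR' hR'R z hz => by
    rw [mem_sphere, ← hseg0 z, dist_comm, (hseg' z hz).dist_eq le_rfl hR' hR'R,
      sub_zero]
  have hinj : ∀ {R R' : ℝ}, 0 < R' → R' < R → InjOn (fun z => seg z R') (sphere y R) :=
    fun hR' hR'R z hz z' hz' h => by
      have := hnb.eqOn_of_eq (hseg' z hz) (hseg' z' hz') ((hseg0 z).trans (hseg0 z').symm) h
        hR' hR'R ⟨by linarith, le_rfl⟩
      rwa [hsegR z hz, hsegR z' hz'] at this
  have hfin' : ∀ u ≥ R₀, (sphere y u).Finite := fun u hu => by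
    rcases hu.eq_or_lt with rfl | hu
    · exact hfin
    · exact Finite.of_finite_image (hfin.subset (hmaps hR₀.le hu.le).image_subset) (hinj hR₀ hu)
  have hanti : AntitoneOn (fun u => (sphere y u).ncard) (Ici R₀) := fun R' hR' R _ h => by
    rcases h.eq_or_lt with rfl | h
    · exact le_rfl
    · exact ncard_le_ncard_of_injOn _ (hmaps (hR₀.le.trans hR') h.le)
        (hinj (hR₀.trans_le hR') h) (hfin' R' hR')
  obtain ⟨N, hN, hconst⟩ := exists_forall_ge_eq_of_antitoneOn hanti
  refine ⟨N, hN, hfin' N hN, fun x hx T hT => ?_⟩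
  have hN0 : 0 < N := hR₀.trans_le hN
  have himg : (fun z => seg z N) '' sphere y T = sphere y N :=
    eq_of_subset_of_ncard_le (hmaps hN0.le hT.le).image_subset
      (by rw [(hinj hN0 hT).ncard_image, hconst T hT.le]) (hfin' N hN)
  obtain ⟨z, hz, rfl⟩ := himg.symm ▸ hx
  exact ⟨seg z, hseg0 z, rfl, hseg' z hz⟩

/-- Beyond radius `N`, the space is the disjoint union of the finitely many rays `g x`, `x ∈ S`,
issuing from `y`. -/
structure RayDecomposition (y : Y) (S : Set Y) (N : ℝ) (g : Y → ℝ → Y) : Prop where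
  finite : S.Finite
  isGeodesicRay : ∀ x ∈ S, IsGeodesicRay (g x)
  apply_zero : ∀ x ∈ S, g x 0 = y
  eq_of_apply_eq : ∀ x ∈ S, ∀ x' ∈ S, ∀ u, N ≤ u → g x u = g x' u → x = x'
  exists_eq_apply : ∀ w : Y, N ≤ dist w y → ∃ x ∈ S, w = g x (dist w y)

theorem exists_rayDecomposition (hgeo : GeodesicSpace Y) (hnb : NonBranching Y) {y : Y}
    {R₀ : ℝ} (hR₀ : 0 < R₀) (hfin : (sphere y R₀).Finite) :
    ∃ N > 0, ∃ g : Y → ℝ → Y, RayDecomposition y (sphere y N) N g := by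
  obtain ⟨N, hN, hNfin, hext⟩ := exists_radius_segments_extend hgeo hnb hR₀ hfin
  have hN0 : 0 < N := hR₀.trans_le hN
  have : Nonempty Y := ⟨y⟩
  choose! g hg hg0 hgN using fun x hx => hnb.exists_isGeodesicRay hN0 (hext x hx)
  refine ⟨N, hN0, g, hNfin, hg, hg0, fun x hx x' hx' u hu hxu => ?_, fun w hw => ?_⟩
  · have := hnb.eqOn_of_eq ((hg x hx).isGeodesicSegment (u + 1))
      ((hg x' hx').isGeodesicSegment (u + 1)) ((hg0 x hx).trans (hg0 x' hx').symm) hxu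
      (hN0.trans_le hu) (by linarith) ⟨hN0.le, by linarith⟩
    rwa [hgN x hx, hgN x' hx'] at this
  rcases hw.eq_or_lt with h | h
  · exact ⟨w, h.symm, by rw [← h, hgN w h.symm]⟩
  obtain ⟨c, hc0, hcw, hc⟩ := hgeo y w
  rw [dist_comm] at h ⊢
  have hx : c N ∈ sphere y N := by
    rw [mem_sphere, ← hc0, dist_comm, hc.dist_eq le_rfl hN0.le h.le, sub_zero]
  refine ⟨c N, hx, ?_⟩
  rw [← hnb.eqOn_of_eq hc ((hg _ hx).isGeodesicSegment _) (hc0.trans (hg0 _ hx).symm)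
    (hgN _ hx).symm hN0 h ⟨dist_nonneg, le_rfl⟩, hcw]

namespace RayDecomposition

variable {y : Y} {S : Set Y} {N : ℝ} {g : Y → ℝ → Y}

theorem dist_apply (h : RayDecomposition y S N g) {x : Y} (hx : x ∈ S) {u : ℝ} (hu : 0 ≤ u) :
    dist (g x u) y = u :=
  (h.isGeodesicRay x hx).dist_apply_eq (h.apply_zero x hx) hu

/-- The sets of times at which the curve lies on the various rays are finitely many, closed and
pairwise disjoint, so by connectedness only one of them is nonempty. -/
theorem eq_apply_dist_of_continuousOn (h : RayDecomposition y S N g) {σ : ℝ → Y} {a b : ℝ}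
    (hσ : ContinuousOn σ (Icc a b)) (hfar : ∀ t ∈ Icc a b, N ≤ dist (σ t) y) {x : Y}
    (hx : x ∈ S) (ha : σ a = g x (dist (σ a) y)) :
    ∀ t ∈ Icc a b, σ t = g x (dist (σ t) y) := by
  intro t ht
  have hD : ContinuousOn (fun t => dist (σ t) y) (Icc a b) :=
    continuous_dist.comp_continuousOn (hσ.prodMk continuousOn_const)
  let A : Y → Set ℝ := fun x => Icc a b ∩ (fun t => dist (σ t) (g x (dist (σ t) y))) ⁻¹' {0}
  have hA : ∀ x ∈ S, IsClosed (A x) := fun x hx =>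
    (continuous_dist.comp_continuousOn
      (hσ.prodMk ((h.isGeodesicRay x hx).continuousOn.comp hD fun _ _ => dist_nonneg)))
      |>.preimage_isClosed_of_isClosed isClosed_Icc isClosed_singleton
  have hmemA : ∀ {x t}, t ∈ A x ↔ t ∈ Icc a b ∧ σ t = g x (dist (σ t) y) := by
    simp [A, dist_eq_zero]
  have hcov : Icc a b ⊆ ⋃ x ∈ S, A x := fun t ht => by
    obtain ⟨x, hx, hxt⟩ := h.exists_eq_apply (σ t) (hfar t ht)
    exact mem_iUnion₂.2 ⟨x, hx, hmemA.2 ⟨ht, hxt⟩⟩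
  have hdisj : ∀ t ∈ Icc a b, ∀ i ∈ S, ∀ j ∈ S, t ∈ A i → t ∈ A j → i = j :=
    fun t ht i hi j hj hti htj =>
      h.eq_of_apply_eq i hi j hj _ (hfar t ht) ((hmemA.1 hti).2.symm.trans (hmemA.1 htj).2)
  have hax : a ∈ Icc a b := ⟨le_rfl, ht.1.trans ht.2⟩
  exact (hmemA.1 (isPreconnected_Icc.subset_of_finite_closed_cover h.finite hA hcov hdisj hx hax
    (hmemA.2 ⟨hax, ha⟩) ht)).2

theorem exists_dist_lt_of_ne (h : RayDecomposition y S N g) (hN : 0 ≤ N) {σ : ℝ → Y} {L : ℝ}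
    (hσ : IsGeodesicSegment σ L) (hL : 0 ≤ L) {a b : Y} (ha : a ∈ S) (hb : b ∈ S) (hab : a ≠ b)
    {u v : ℝ} (hu : N ≤ u) (hv : N ≤ v) (h0 : σ 0 = g a u) (hσL : σ L = g b v) :
    ∃ t ∈ Icc 0 L, dist (σ t) y < N := by
  by_contra! hfar
  have := h.eq_apply_dist_of_continuousOn hσ.continuousOn hfar ha
    (by rw [h0, h.dist_apply ha (hN.trans hu)]) L ⟨hL, le_rfl⟩
  rw [hσL, h.dist_apply hb (hN.trans hv)] at this
  exact hab (h.eq_of_apply_eq a ha b hb v hv this.symm)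

/-- Up to its first visit to the sphere of radius `N`, the geodesic stays on the ray `g a`. -/
theorem apply_sub_eq_of_dist_le (h : RayDecomposition y S N g) (hN : 0 ≤ N) {σ : ℝ → Y}
    {L : ℝ} (hσ : IsGeodesicSegment σ L) {a : Y} (ha : a ∈ S) {u : ℝ} (hu : N ≤ u)
    (h0 : σ 0 = g a u) {t : ℝ} (ht : t ∈ Icc 0 L) (hdt : dist (σ t) y ≤ N) :
    u - N ≤ t ∧ σ (u - N) = g a N := by
  have hσt : ContinuousOn σ (Icc 0 t) := hσ.continuousOn.mono (Icc_subset_Icc_right ht.2)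
  have hσ0 : dist (σ 0) y = u := by rw [h0, h.dist_apply ha (hN.trans hu)]
  obtain ⟨t₁, ht₁, hD₁, hfar⟩ := exists_first_eq_of_continuousOn (f := fun s => dist (σ s) y) ht.1
    (continuous_dist.comp_continuousOn (hσt.prodMk continuousOn_const)) (hσ0 ▸ hu) hdt
  have hσt₁ : σ t₁ = g a N := by
    have := h.eq_apply_dist_of_continuousOn (hσt.mono (Icc_subset_Icc_right ht₁.2)) hfar ha
      (by rw [hσ0, h0]) t₁ ⟨ht₁.1, le_rfl⟩
    rwa [hD₁] at this
  obtain rfl : t₁ = u - N := by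
    have := hσ.dist_eq le_rfl ht₁.1 (ht₁.2.trans ht.2)
    rw [h0, hσt₁, dist_comm, (h.isGeodesicRay a ha).dist_eq hN hu] at this
    linarith
  exact ⟨ht₁.2, hσt₁⟩

/-- A geodesic from one ray to another must enter the ball of radius `N`, and it enters and
leaves that ball along the two rays. -/
theorem dist_apply_apply_of_ne (h : RayDecomposition y S N g) (hgeo : GeodesicSpace Y)
    (hN : 0 ≤ N) {a b : Y} (ha : a ∈ S) (hb : b ∈ S) (hab : a ≠ b) {u v : ℝ} (hu : N ≤ u)
    (hv : N ≤ v) : dist (g a u) (g b v) = (u - N) + (v - N) + dist (g a N) (g b N) := by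
  obtain ⟨σ, hσ0, hσL, hσ⟩ := hgeo (g a u) (g b v)
  set L := dist (g a u) (g b v)
  obtain ⟨t, ht, hdt⟩ := h.exists_dist_lt_of_ne hN hσ dist_nonneg ha hb hab hu hv hσ0 hσL
  obtain ⟨hta, hσa⟩ := h.apply_sub_eq_of_dist_le hN hσ ha hu hσ0 ht hdt.le
  obtain ⟨htb, hσb⟩ := h.apply_sub_eq_of_dist_le hN hσ.reverse hb hv (by simpa using hσL)
    (t := L - t) ⟨by linarith [ht.2], by linarith [ht.1]⟩ (by simpa using hdt.le)
  have := hσ.dist_eq (by linarith) (show u - N ≤ L - (v - N) by linarith) (by linarith)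
  rw [hσa, show σ (L - (v - N)) = g b N from hσb] at this
  linarith

theorem exists_line (h : RayDecomposition y S N g) (hgeo : GeodesicSpace Y) (hN : 0 ≤ N)
    {a b : Y} (ha : a ∈ S) (hb : b ∈ S) (hab : a ≠ b) :
    ∃ ℓ : ℝ → Y, ∀ s t, dist (ℓ s) (ℓ t) = |s - t| := by
  obtain ⟨m, hm0, hmδ, hm⟩ := hgeo (g a N) (g b N)
  refine exists_line_of_rays ((h.isGeodesicRay a ha).comp_add hN)
    ((h.isGeodesicRay b hb).comp_add hN) hm (by simpa using hm0) (by simpa using hmδ)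
    fun s hs t ht => ?_
  rw [h.dist_apply_apply_of_ne hgeo hN ha hb hab (by linarith) (by linarith)]
  ring

theorem eq_apply_of_subsingleton (h : RayDecomposition y S N g) (hS : S.Subsingleton) {x : Y}
    (hx : x ∈ S) (w : Y) (hw : N ≤ dist w y) : w = g x (dist w y) := by
  obtain ⟨x', hx', hw'⟩ := h.exists_eq_apply w hw
  rwa [hS hx' hx] at hw'

end RayDecomposition

section SingleRay

variable {y : Y} {N : ℝ} {γ : ℝ → Y}

theorem exists_eq_ray_of_isGeodesicSegment (hγ : IsGeodesicRay γ) (hγ0 : γ 0 = y)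
    (hcov : ∀ w, N ≤ dist w y → w = γ (dist w y)) {c : ℝ → Y} {L T u : ℝ}
    (hc : IsGeodesicSegment c L) (hL : 0 ≤ L) (hcL : c L = γ T) (hu : N ≤ u)
    (hc0 : dist (c 0) y ≤ u) (huT : u ≤ T) : T - u ≤ L ∧ c (L - (T - u)) = γ u := by
  have hu0 : 0 ≤ u := dist_nonneg.trans hc0
  obtain ⟨t, ht, htu⟩ := intermediate_value_Icc hL (f := fun s => dist (c s) y)
    (continuous_dist.comp_continuousOn (hc.continuousOn.prodMk continuousOn_const))
    ⟨hc0, by rw [hcL, hγ.dist_apply_eq hγ0 (hu0.trans huT)]; exact huT⟩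
  simp only at htu
  have hct : c t = γ u := by
    rw [hcov (c t) (by rw [htu]; exact hu), htu]
  obtain rfl : t = L - (T - u) := by
    have := hc.dist_eq ht.1 ht.2 le_rfl
    rw [hct, hcL, hγ.dist_eq hu0 huT] at this
    linarith
  exact ⟨by linarith [ht.1], hct⟩

theorem dist_ray_eq_add (hgeo : GeodesicSpace Y) (hγ : IsGeodesicRay γ) (hγ0 : γ 0 = y)
    (hcov : ∀ w, N ≤ dist w y → w = γ (dist w y)) {z : Y} {T u : ℝ} (hu : N ≤ u)
    (hz : dist z y ≤ u) (huT : u ≤ T) : dist z (γ T) = dist z (γ u) + (T - u) := by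
  obtain ⟨c, hc0, hcL, hc⟩ := hgeo z (γ T)
  obtain ⟨hle, hcu⟩ := exists_eq_ray_of_isGeodesicSegment hγ hγ0 hcov hc dist_nonneg hcL hu
    (hc0 ▸ hz) huT
  have := hc.dist_eq le_rfl (sub_nonneg.2 hle) (sub_le_self _ (by linarith))
  rw [hc0, hcu] at this
  linarith

/-- Geodesics from `z` and from `w` to a far point `γ T` both end along `γ`, so by nonbranching
the shorter one is a final piece of the longer one. -/
theorem dist_eq_sub_dist_ray (hgeo : GeodesicSpace Y) (hnb : NonBranching Y)
    (hγ : IsGeodesicRay γ) (hγ0 : γ 0 = y) (hcov : ∀ w, N ≤ dist w y → w = γ (dist w y))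
    {z w : Y} {T : ℝ} (hNT : N + 1 ≤ T) (hzT : dist z y + 1 ≤ T) (hwT : dist w y + 1 ≤ T)
    (hle : dist w (γ T) ≤ dist z (γ T)) : dist z w = dist z (γ T) - dist w (γ T) := by
  have htail : ∀ {p : Y} {c : ℝ → Y}, dist p y + 1 ≤ T → c 0 = p → c (dist p (γ T)) = γ T →
      IsGeodesicSegment c (dist p (γ T)) → ∀ s ∈ Icc (0:ℝ) 1,
        c (dist p (γ T) - s) = γ (T - s) := fun hp hc0 hcL hc s hs => by
    have := (exists_eq_ray_of_isGeodesicSegment hγ hγ0 hcov hc dist_nonneg hcL (u := T - s)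
      (by linarith [hs.2]) (by rw [hc0]; linarith [hs.2]) (by linarith [hs.1])).2
    rwa [sub_sub_cancel] at this
  obtain ⟨α, hα0, hαL, hα⟩ := hgeo z (γ T)
  obtain ⟨β, hβ0, hβL, hβ⟩ := hgeo w (γ T)
  have := hnb _ (fun t => α (dist z (γ T) - t)) (fun t => β (dist w (γ T) - t))
    (hα.reverse.mono hle) hβ.reverse
    ⟨1, one_pos, fun s hs => (htail hzT hα0 hαL hα s hs).trans (htail hwT hβ0 hβL hβ s hs).symm⟩
    ⟨dist_nonneg, le_rfl⟩
  simp only [sub_self, hβ0] at this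
  calc dist z w = dist (α 0) (α (dist z (γ T) - dist w (γ T))) := by rw [hα0, this]
    _ = _ := by rw [hα.dist_eq le_rfl (sub_nonneg.2 hle) (sub_le_self _ dist_nonneg), sub_zero]

/-- When far from `y` there is only the ray `γ`, its Busemann function `z ↦ T - dist z (γ T)`
(constant for `T ≥ max N (dist z y)`) embeds the space isometrically into `ℝ`. -/
theorem exists_isometry_of_ray (hgeo : GeodesicSpace Y) (hnb : NonBranching Y)
    (hγ : IsGeodesicRay γ) (hγ0 : γ 0 = y) (hcov : ∀ w, N ≤ dist w y → w = γ (dist w y)) :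
    ∃ φ : Y → ℝ, Isometry φ ∧ φ y = 0 ∧ Ici 0 ⊆ range φ := by
  set T₀ : Y → ℝ := fun z => max N (dist z y)
  set φ : Y → ℝ := fun z => T₀ z - dist z (γ (T₀ z))
  have hφ : ∀ z T, T₀ z ≤ T → φ z = T - dist z (γ T) := fun z T hT => by
    rw [dist_ray_eq_add hgeo hγ hγ0 hcov (le_max_left _ _) (le_max_right _ _) hT]
    ring
  refine ⟨φ, Isometry.of_dist_eq fun z w => ?_, ?_, fun s hs => ⟨γ s, ?_⟩⟩
  · set T := max N (max (dist z y) (dist w y)) + 1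
    have hNT : N + 1 ≤ T := by linarith [le_max_left N (max (dist z y) (dist w y))]
    have hzT : dist z y + 1 ≤ T := by
      linarith [le_max_left (dist z y) (dist w y), le_max_right N (max (dist z y) (dist w y))]
    have hwT : dist w y + 1 ≤ T := by
      linarith [le_max_right (dist z y) (dist w y), le_max_right N (max (dist z y) (dist w y))]
    rw [Real.dist_eq, hφ z T (max_le (by linarith) (by linarith)),
      hφ w T (max_le (by linarith) (by linarith))]
    rcases le_total (dist w (γ T)) (dist z (γ T)) with h | h
    · rw [dist_eq_sub_dist_ray hgeo hnb hγ hγ0 hcov hNT hzT hwT h, abs_of_nonpos (by linarith)]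
      ring
    · rw [dist_comm z w, dist_eq_sub_dist_ray hgeo hnb hγ hγ0 hcov hNT hwT hzT h,
        abs_of_nonneg (by linarith)]
      ring
  · have hT₀ : 0 ≤ T₀ y := le_max_of_le_right dist_nonneg
    simp only [φ]
    rw [dist_comm, hγ.dist_apply_eq hγ0 hT₀, sub_self]
  · have hγs : dist (γ s) y = s := hγ.dist_apply_eq hγ0 hs
    rw [hφ (γ s) (max N s) (by simp only [T₀, hγs]; rfl),
      hγ.dist_eq hs (le_max_right N s)]
    ring

end SingleRay

section Classification

theorem range_eq_univ_or_Ici [CompleteSpace Y] (hgeo : GeodesicSpace Y) {φ : Y → ℝ}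
    (hφ : Isometry φ) (h0 : Ici 0 ⊆ range φ) : range φ = univ ∨ ∃ c ≤ 0, range φ = Ici c := by
  have := hgeo.preconnectedSpace
  have hconn : (range φ).OrdConnected :=
    isPreconnected_iff_ordConnected.1 (isPreconnected_range hφ.continuous)
  have hclosed : IsClosed (range φ) := hφ.isClosedEmbedding.isClosed_range
  have h0' : (0:ℝ) ∈ range φ := h0 self_mem_Ici
  by_cases hbdd : BddBelow (range φ)
  · refine .inr ⟨sInf (range φ), csInf_le hbdd h0',
      subset_antisymm (fun x hx => csInf_le hbdd hx) fun x hx => ?_⟩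
    rcases le_total 0 x with h | h
    · exact h0 h
    · exact hconn.out (hclosed.csInf_mem ⟨0, h0'⟩ hbdd) h0' ⟨hx, h⟩
  · refine .inl (eq_univ_of_forall fun x => ?_)
    rcases le_total 0 x with h | h
    · exact h0 h
    · obtain ⟨b, hb, hbx⟩ := not_bddBelow_iff.1 hbdd x
      exact hconn.out hb h0' ⟨hbx.le, h⟩

theorem encard_sphere_eq_of_isometry {φ : Y → ℝ} (hφ : Isometry φ) (y : Y) {R : ℝ}
    (hR : 0 ≤ R) : (sphere y R).encard = (range φ ∩ {φ y - R, φ y + R}).encard := by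
  rw [← Real.sphere_eq_pair _ hR, ← image_preimage_eq_range_inter, hφ.injective.encard_image,
    hφ.preimage_sphere]

theorem encard_Ici_inter_pair_of_le {a R : ℝ} (hR : 0 < R) (hRa : R ≤ a) :
    (Ici 0 ∩ {a - R, a + R}).encard = 2 := by
  rw [inter_eq_right.2 (pair_subset (mem_Ici.2 (sub_nonneg.2 hRa)) (mem_Ici.2 (by linarith))),
    encard_pair (by linarith)]

theorem encard_Ici_inter_pair_of_lt {a R : ℝ} (ha : 0 ≤ a) (haR : a < R) :
    (Ici 0 ∩ {a - R, a + R}).encard = 1 := by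
  rw [show Ici 0 ∩ {a - R, a + R} = {a + R} by
    ext t
    simp only [mem_inter_iff, mem_Ici, mem_insert_iff, mem_singleton_iff]
    constructor
    · rintro ⟨ht, rfl | rfl⟩
      exacts [absurd ht (by linarith), rfl]
    · rintro rfl
      exact ⟨by linarith, .inr rfl⟩, encard_singleton]

theorem cases_of_isometry [ProperSpace Y] (hgeo : GeodesicSpace Y) {y : Y} {φ : Y → ℝ}
    (hφ : Isometry φ) (hφy : φ y = 0) (h0 : Ici 0 ⊆ range φ) :
    ((∀ R > (0:ℝ), (sphere y R).encard = 1) ∧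
      ∃ φ : Y → ℝ, Isometry φ ∧ φ y = 0 ∧ range φ = Ici 0) ∨
    (∃ a > (0:ℝ),
      (∀ R ∈ Ioc (0:ℝ) a, (sphere y R).encard = 2) ∧
      (∀ R > a, (sphere y R).encard = 1) ∧
      ∃ φ : Y → ℝ, Isometry φ ∧ φ y = a ∧ range φ = Ici 0) ∨
    ((∀ R > (0:ℝ), (sphere y R).encard = 2) ∧
      ∃ φ : Y → ℝ, Isometry φ ∧ φ y = 0 ∧ Function.Surjective φ) := by
  rcases range_eq_univ_or_Ici hgeo hφ h0 with huniv | ⟨c, hc, hrange⟩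
  · refine .inr (.inr ⟨fun R hR => ?_, φ, hφ, hφy, range_eq_univ.1 huniv⟩)
    rw [encard_sphere_eq_of_isometry hφ y hR.le, huniv, univ_inter, encard_pair (by linarith)]
  set ψ : Y → ℝ := fun z => φ z - c
  have hψ : Isometry ψ := Isometry.of_dist_eq fun z w => by
    rw [Real.dist_eq, sub_sub_sub_cancel_right, ← Real.dist_eq, hφ.dist_eq]
  have hψrange : range ψ = Ici 0 := by
    ext t
    simp only [mem_range, mem_Ici, ψ]
    constructor
    · rintro ⟨z, rfl⟩
      exact sub_nonneg.2 (hrange ▸ mem_range_self z : φ z ∈ Ici c)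
    · intro ht
      obtain ⟨z, hz⟩ : t + c ∈ range φ := hrange ▸ (by simp [ht] : t + c ∈ Ici c)
      exact ⟨z, by rw [hz, add_sub_cancel_right]⟩
  have hψy : ψ y = -c := by simp only [ψ, hφy, zero_sub]
  have hcount : ∀ R > 0, (sphere y R).encard = (Ici 0 ∩ {-c - R, -c + R}).encard :=
    fun R hR => by rw [encard_sphere_eq_of_isometry hψ y hR.le, hψrange, hψy]
  rcases hc.eq_or_lt with rfl | hc
  · refine .inl ⟨fun R hR => ?_, ψ, hψ, by rw [hψy, neg_zero], hψrange⟩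
    rw [hcount R hR, encard_Ici_inter_pair_of_lt (by simp) (by simpa using hR)]
  · refine .inr (.inl ⟨-c, by linarith, fun R hR => ?_, fun R hR => ?_, ψ, hψ, hψy, hψrange⟩)
    · rw [hcount R hR.1, encard_Ici_inter_pair_of_le hR.1 hR.2]
    · rw [hcount R (by linarith), encard_Ici_inter_pair_of_lt (by linarith) hR]

end Classification

section Splitting

variable {N : Type*} [MetricSpace N] {φ : Y → ℝ × N}

/-- If the factor `N` has two points then, `Y` being connected, so is `N`, and the sphere of
radius `R` about `y` contains a copy of the closed `R`-ball of `N` about the base point. -/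
theorem infinite_sphere_of_isometry_prod [PreconnectedSpace Y] [Nontrivial N] (hφ : Isometry φ)
    (hsurj : Function.Surjective φ) (y : Y) {R : ℝ} (hR : 0 < R) : (sphere y R).Infinite := by
  obtain ⟨n, hn⟩ := exists_ne (φ y).2
  obtain ⟨z, hz⟩ := hsurj ((φ y).1, n)
  set e : Y → ℝ := fun w => dist (φ w).2 (φ y).2
  have he : Continuous e := (continuous_snd.comp hφ.continuous).dist continuous_const
  have hez : 0 < e z := by simpa [e, hz] using hn
  set T := φ ⁻¹' ({(φ y).1 + R} ×ˢ closedBall (φ y).2 R)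
  have hT : T ⊆ sphere y R := fun w ⟨hw₁, hw₂⟩ => by
    rw [mem_sphere, ← hφ.dist_eq, Prod.dist_eq, mem_singleton_iff.1 hw₁, Real.dist_eq,
      add_sub_cancel_left, abs_of_pos hR]
    exact max_eq_left hw₂
  have hIcc : Icc 0 (min (e z) R) ⊆ e '' T := fun s hs => by
    obtain ⟨w, hw⟩ := intermediate_value_univ y z he
      ⟨by simpa [e] using hs.1, hs.2.trans (min_le_left _ _)⟩
    obtain ⟨w', hw'⟩ := hsurj ((φ y).1 + R, (φ w).2)
    refine ⟨w', ?_, by simp only [e, hw', hw]⟩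
    show φ w' ∈ {(φ y).1 + R} ×ˢ closedBall (φ y).2 R
    rw [hw']
    exact ⟨rfl, mem_closedBall.2 (hw.trans_le (hs.2.trans (min_le_right _ _)))⟩
  exact (((Icc_infinite (lt_min hez hR)).mono hIcc).of_image e).mono hT

theorem exists_isometry_of_isometry_prod [Subsingleton N] (hφ : Isometry φ)
    (hsurj : Function.Surjective φ) (y : Y) :
    ∃ ψ : Y → ℝ, Isometry ψ ∧ ψ y = 0 ∧ Function.Surjective ψ := by
  refine ⟨fun z => (φ z).1 - (φ y).1, Isometry.of_dist_eq fun z w => ?_, sub_self _, fun t => ?_⟩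
  · rw [← hφ.dist_eq, Prod.dist_eq, Subsingleton.elim (φ z).2 (φ w).2, dist_self,
      max_eq_left dist_nonneg, Real.dist_eq, Real.dist_eq, sub_sub_sub_cancel_right]
  · obtain ⟨z, hz⟩ := hsurj (t + (φ y).1, (φ y).2)
    exact ⟨z, by simp only [hz, add_sub_cancel_right]⟩

end Splitting

end SphereCount

theorem stmt15 {Y : Type*} [MetricSpace Y] [ProperSpace Y] (y : Y)
    (hgeo : ∀ x z : Y, ∃ c : ℝ → Y, c 0 = x ∧ c (dist x z) = z ∧
      ∀ s ∈ Icc (0:ℝ) (dist x z), ∀ t ∈ Icc (0:ℝ) (dist x z),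
        dist (c s) (c t) = |s - t|)
    (hnb : ∀ (T : ℝ) (c₁ c₂ : ℝ → Y),
      (∀ s ∈ Icc (0:ℝ) T, ∀ t ∈ Icc (0:ℝ) T, dist (c₁ s) (c₁ t) = |s - t|) →
      (∀ s ∈ Icc (0:ℝ) T, ∀ t ∈ Icc (0:ℝ) T, dist (c₂ s) (c₂ t) = |s - t|) →
      (∃ ε > (0:ℝ), ∀ t ∈ Icc (0:ℝ) ε, c₁ t = c₂ t) →
      ∀ t ∈ Icc (0:ℝ) T, c₁ t = c₂ t)
    (hnc : ¬ CompactSpace Y)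
    (hsplit : (∃ c : ℝ → Y, ∀ s t : ℝ, dist (c s) (c t) = |s - t|) →
      ∃ (N : Type) (_ : MetricSpace N) (φ : Y → ℝ × N),
        Isometry φ ∧ Function.Surjective φ) :
    ((∀ R > (0:ℝ), ({x : Y | dist x y = R}).encard = 1) ∧
      ∃ φ : Y → ℝ, Isometry φ ∧ φ y = 0 ∧ Set.range φ = Ici 0) ∨
    (∃ a > (0:ℝ),
      (∀ R ∈ Ioc (0:ℝ) a, ({x : Y | dist x y = R}).encard = 2) ∧
      (∀ R > a, ({x : Y | dist x y = R}).encard = 1) ∧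
      ∃ φ : Y → ℝ, Isometry φ ∧ φ y = a ∧ Set.range φ = Ici 0) ∨
    ((∀ R > (0:ℝ), ({x : Y | dist x y = R}).encard = 2) ∧
      ∃ φ : Y → ℝ, Isometry φ ∧ φ y = 0 ∧ Function.Surjective φ) ∨
    (∀ R > (0:ℝ), ({x : Y | dist x y = R}).encard = ⊤) := by
  replace hgeo : SphereCount.GeodesicSpace Y := hgeo
  replace hnb : SphereCount.NonBranching Y := hnb
  by_cases hinf : ∀ R > (0:ℝ), (sphere y R).encard = ⊤
  · exact .inr (.inr (.inr hinf))
  obtain ⟨R₀, hR₀, hfin⟩ : ∃ R₀ > 0, (sphere y R₀).Finite := by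
    simpa only [not_forall, encard_ne_top_iff, exists_prop] using hinf
  suffices ∃ φ : Y → ℝ, Isometry φ ∧ φ y = 0 ∧ Ici 0 ⊆ range φ by
    obtain ⟨φ, hφ, hφy, hφr⟩ := this
    exact (SphereCount.cases_of_isometry hgeo hφ hφy hφr).imp_right (.imp_right .inl)
  obtain ⟨N₀, hN₀, g, hg⟩ := SphereCount.exists_rayDecomposition hgeo hnb hR₀ hfin
  rcases (sphere y N₀).subsingleton_or_nontrivial with hS | ⟨x₁, hx₁, x₂, hx₂, hne⟩
  · obtain ⟨x₀, hx₀⟩ := hgeo.sphere_nonempty hnc y hN₀.le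
    exact SphereCount.exists_isometry_of_ray hgeo hnb (hg.isGeodesicRay x₀ hx₀)
      (hg.apply_zero x₀ hx₀) (hg.eq_apply_of_subsingleton hS hx₀)
  obtain ⟨N, _, φ, hφ, hφs⟩ := hsplit (hg.exists_line hgeo hN₀.le hx₁ hx₂ hne)
  have : Subsingleton N := by
    by_contra hN
    have := hgeo.preconnectedSpace
    have := not_subsingleton_iff_nontrivial.1 hN
    exact SphereCount.infinite_sphere_of_isometry_prod hφ hφs y hR₀ hfin
  obtain ⟨ψ, hψ, hψy, hψs⟩ := SphereCount.exists_isometry_of_isometry_prod hφ hφs y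
  exact ⟨ψ, hψ, hψy, hψs.range_eq ▸ subset_univ _⟩
end
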